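/- arXiv:2106.04881 — 4 statements merged into one kernel-verified Lean document; each statement's English description precedes it below -/
import Mathlib

section
/- Let μ be a Borel probability measure on ℝ^d such that the local dimension lim_{r→0} log μ(B(w,r))/log r exists for μ-almost every w ∈ ℝ^d. Then for every ε > 0 and every δ ∈ (0,1] there exists a bounded Borel set A ⊆ ℝ^d such that μ(A) ≥ 1 − δ and the upper Minkowski dimension of A satisfies dim̄_M A ≤ dim̄_H μ + ε. -/
open MeasureTheory Filter
open scoped ENNReal

/-- The upper Hausdorff dimension of a measure:
`dim̄_H μ := inf {dim_H A : A Borel, μ A = 1}`. -/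
noncomputable def upperHausdorffDim {X : Type*} [EMetricSpace X] [MeasurableSpace X]
    (μ : Measure X) : ℝ≥0∞ :=
  ⨅ (A : Set X) (_ : MeasurableSet A) (_ : μ A = 1), dimH A

/-- `coveringNumber δ F` is the smallest number of closed balls of diameter at
most `δ` (i.e. of radius `δ/2`) needed to cover `F`. -/
noncomputable def coveringNumber {X : Type*} [PseudoMetricSpace X] (δ : ℝ) (F : Set X) : ℕ :=
  sInf {k : ℕ | ∃ t : Finset X, t.card = k ∧ F ⊆ ⋃ x ∈ t, Metric.closedBall x (δ / 2)}

/-- The upper Minkowski (box-counting) dimension of a set: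
`dim̄_M F := limsup_{δ → 0⁺} log N_δ(F) / log (1/δ)`. -/
noncomputable def upperMinkowskiDim {X : Type*} [PseudoMetricSpace X] (F : Set X) : ℝ≥0∞ :=
  limsup (fun δ : ℝ => ENNReal.ofReal (Real.log (coveringNumber δ F) / Real.log (1 / δ)))
    (nhdsWithin 0 (Set.Ioi 0))

/-!
Let `α = dim̄_H μ`, which is at most `d`. By the mass distribution principle, for `τ₀ > α` the
points `w` with `μ(B(w,r)) ≤ r ^ τ₀` for all small `r` form a null set, so almost every local
dimension is at most `α` and almost every `w` satisfies `μ(B(w,r)) ≥ r ^ (α + ε)` for all small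
`r`. By continuity from below, this holds uniformly for `r < 1/(N+1)` on a set `A ⊆ B(0,N)` of
measure `≥ 1 - δ`, for some `N`. On such a set a `δ/2`-separated family has at most
`(δ/4) ^ (-(α + ε))` points, because the balls of radius `δ/4` around them are disjoint and each has
mass `≥ (δ/4) ^ (α + ε)`; a maximal one is a `δ/2`-cover, which bounds the covering numbers.
-/

open Metric hiding coveringNumber
open Set Topology
open scoped NNReal

section LocalDimension

theorem Real.lt_rpow_of_lt_log_div_log {r x τ : ℝ} (hr0 : 0 < r) (hr1 : r < 1) (hx : 0 ≤ x)
    (h : τ < Real.log x / Real.log r) : x < r ^ τ := by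
  rcases hx.eq_or_lt with rfl | hx
  · exact Real.rpow_pos_of_pos hr0 τ
  rw [Real.lt_rpow_iff_log_lt hx hr0]
  rwa [lt_div_iff_of_neg (Real.log_neg hr0 hr1)] at h

theorem Real.rpow_lt_of_log_div_log_lt {r x τ : ℝ} (hr0 : 0 < r) (hr1 : r < 1) (hx : 0 < x)
    (h : Real.log x / Real.log r < τ) : r ^ τ < x := by
  rw [← Real.log_lt_log_iff (Real.rpow_pos_of_pos hr0 τ) hx, Real.log_rpow hr0]
  rwa [div_lt_iff_of_neg (Real.log_neg hr0 hr1)] at h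

variable {g : ℝ → ℝ} {c τ : ℝ}

theorem le_of_tendsto_log_div_log_of_frequently
    (hg : Tendsto (fun r => Real.log (g r) / Real.log r) (𝓝[>] 0) (𝓝 c)) (hg0 : ∀ r, 0 ≤ g r)
    (hfreq : ∃ᶠ r in 𝓝[>] 0, r ^ τ ≤ g r) : c ≤ τ := by
  by_contra! hτc
  obtain ⟨r, hle, hgt, hr0, hr1⟩ :=
    (hfreq.and_eventually ((hg.eventually (eventually_gt_nhds hτc)).and
      (Ioo_mem_nhdsGT one_pos))).exists
  exact (Real.lt_rpow_of_lt_log_div_log hr0 hr1 (hg0 r) hgt).not_ge hle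

theorem eventually_rpow_lt_of_tendsto_log_div_log
    (hg : Tendsto (fun r => Real.log (g r) / Real.log r) (𝓝[>] 0) (𝓝 c))
    (hpos : ∀ᶠ r in 𝓝[>] 0, 0 < g r) (hcτ : c < τ) : ∀ᶠ r in 𝓝[>] 0, r ^ τ < g r := by
  filter_upwards [hg.eventually (eventually_lt_nhds hcτ), Ioo_mem_nhdsGT one_pos, hpos]
    with r hr hr01 hgr
  exact Real.rpow_lt_of_log_div_log_lt hr01.1 hr01.2 hgr hr

end LocalDimension

theorem upperHausdorffDim_le_dimH_univ {X : Type*} [EMetricSpace X] [MeasurableSpace X]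
    (μ : Measure X) [IsProbabilityMeasure μ] : upperHausdorffDim μ ≤ dimH (univ : Set X) :=
  iInf₂_le_of_le univ MeasurableSet.univ (iInf_le _ measure_univ)

section BallMeasures

variable {X : Type*} [PseudoMetricSpace X] [MeasurableSpace X] [OpensMeasurableSpace X]

theorem measure_restrict_le_ediam_rpow (μ : Measure X) {F : Set X} {τ c : ℝ} (hτ : 0 ≤ τ)
    (hball : ∀ w ∈ F, ∀ r ∈ Ioo 0 c, μ (closedBall w r) ≤ ENNReal.ofReal (r ^ τ))
    {S : Set X} (hS : ediam S < ENNReal.ofReal c) : μ.restrict F S ≤ ediam S ^ τ := by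
  have hρ : ediam S ≠ ⊤ := hS.ne_top
  set ρ := (ediam S).toReal
  calc μ.restrict F S ≤ μ.restrict F (closure S) := measure_mono subset_closure
    _ = μ (closure S ∩ F) := Measure.restrict_apply isClosed_closure.measurableSet
    _ ≤ ENNReal.ofReal (ρ ^ τ) := ?_
    _ = ediam S ^ τ := by
      rw [← ENNReal.ofReal_rpow_of_nonneg ENNReal.toReal_nonneg hτ, ENNReal.ofReal_toReal hρ]
  rcases (closure S ∩ F).eq_empty_or_nonempty with h | ⟨w, hwS, hwF⟩
  · simp [h]
  -- `closure S` lies in every ball around `w` of radius `r > ρ`; let `r` decrease to `ρ`.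
  have hlim : Tendsto (fun r => ENNReal.ofReal (r ^ τ)) (𝓝[>] ρ) (𝓝 (ENNReal.ofReal (ρ ^ τ))) :=
    ((ENNReal.continuous_ofReal.comp (Real.continuous_rpow_const hτ)).tendsto ρ).mono_left
      nhdsWithin_le_nhds
  refine ge_of_tendsto hlim ?_
  filter_upwards [Ioo_mem_nhdsGT (ENNReal.toReal_lt_of_lt_ofReal hS)] with r hr
  calc μ (closure S ∩ F) ≤ μ (closedBall w r) := measure_mono fun y hy => ?_
    _ ≤ ENNReal.ofReal (r ^ τ) := hball w hwF r ⟨ENNReal.toReal_nonneg.trans_lt hr.1, hr.2⟩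
  have hyw : edist y w ≤ ediam S := ediam_closure S ▸ edist_le_ediam_of_mem hy.1 hwS
  rw [mem_closedBall, dist_edist]
  exact (ENNReal.toReal_mono hρ hyw).trans hr.1.le

theorem upperSemicontinuous_measure_closedBall (μ : Measure X) [IsFiniteMeasure μ] (r : ℝ) :
    UpperSemicontinuous fun w => μ (closedBall w r) := by
  intro w y hy
  have hlim : Tendsto (fun r' => μ (closedBall w r')) (𝓝[>] r) (𝓝 (μ (closedBall w r))) := by
    have := tendsto_measure_biInter_gt (μ := μ) (s := closedBall w) (a := r)
      (fun _ _ => measurableSet_closedBall.nullMeasurableSet)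
      (fun _ _ _ h => closedBall_subset_closedBall h) ⟨r + 1, by linarith, measure_ne_top _ _⟩
    rwa [biInter_gt_closedBall] at this
  obtain ⟨r', hr'y, hr'⟩ := ((hlim.eventually (gt_mem_nhds hy)).and self_mem_nhdsWithin).exists
  filter_upwards [ball_mem_nhds w (sub_pos.2 hr')] with w' hw'
  refine (measure_mono (closedBall_subset_closedBall' ?_)).trans_lt hr'y
  linarith [mem_ball.1 hw']

theorem isClosed_setOf_forall_le_measure_closedBall (μ : Measure X) [IsFiniteMeasure μ]
    (I : Set ℝ) (m : ℝ → ℝ≥0∞) : IsClosed {w | ∀ r ∈ I, m r ≤ μ (closedBall w r)} := by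
  convert isClosed_biInter fun r (_ : r ∈ I) =>
    (upperSemicontinuous_measure_closedBall μ r).isClosed_preimage (m r) using 1
  ext; simp

end BallMeasures

section MassDistribution

variable {X : Type*} [MetricSpace X] [MeasurableSpace X] [BorelSpace X]

/-- The mass distribution principle. -/
theorem le_upperHausdorffDim_of_measure_closedBall_le (μ : Measure X) [IsProbabilityMeasure μ]
    {F : Set X} (hF : μ F ≠ 0) {τ c : ℝ} (hc : 0 < c)
    (hball : ∀ w ∈ F, ∀ r ∈ Ioo 0 c, μ (closedBall w r) ≤ ENNReal.ofReal (r ^ τ)) :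
    ENNReal.ofReal τ ≤ upperHausdorffDim μ := by
  rcases le_or_gt τ 0 with hτ | hτ
  · simp [ENNReal.ofReal_of_nonpos hτ]
  have hν : μ.restrict F ≤ μH[τ] :=
    Measure.le_hausdorffMeasure τ _ (ENNReal.ofReal (c / 2)) (by simpa using hc) fun S hS =>
      measure_restrict_le_ediam_rpow μ hτ.le hball <|
        hS.trans_lt ((ENNReal.ofReal_lt_ofReal_iff hc).2 (half_lt_self hc))
  refine le_iInf₂ fun A hA => le_iInf fun hμA => ?_
  have hFA : μ F ≤ μH[τ.toNNReal] A := by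
    calc μ F = μ.restrict F A := by
          rw [Measure.restrict_apply hA, inter_comm, measure_inter_conull]
          exact (prob_compl_eq_zero_iff hA).2 hμA
      _ ≤ μH[τ.toNNReal] A := by rw [Real.coe_toNNReal _ hτ.le]; exact hν A
  simpa [ENNReal.ofReal] using
    le_dimH_of_hausdorffMeasure_ne_zero (pos_iff_ne_zero.1 ((pos_iff_ne_zero.2 hF).trans_le hFA))

theorem ae_frequently_rpow_lt_measure_closedBall (μ : Measure X) [IsProbabilityMeasure μ]
    {τ : ℝ} (hτ : upperHausdorffDim μ < ENNReal.ofReal τ) :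
    ∀ᵐ w ∂μ, ∃ᶠ r in 𝓝[>] 0, ENNReal.ofReal (r ^ τ) < μ (closedBall w r) := by
  have hsub : {w | ∀ᶠ r in 𝓝[>] 0, μ (closedBall w r) ≤ ENNReal.ofReal (r ^ τ)} ⊆
      ⋃ n : ℕ, {w | ∀ r ∈ Ioo 0 (1 / (n + 1 : ℝ)),
        μ (closedBall w r) ≤ ENNReal.ofReal (r ^ τ)} := by
    intro w hw
    obtain ⟨u, hu, hsub⟩ := mem_nhdsGT_iff_exists_Ioo_subset.1 hw
    obtain ⟨n, hn⟩ := exists_nat_one_div_lt (mem_Ioi.1 hu)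
    exact mem_iUnion.2 ⟨n, fun r hr => hsub ⟨hr.1, hr.2.trans hn⟩⟩
  have hnull : μ {w | ∀ᶠ r in 𝓝[>] 0, μ (closedBall w r) ≤ ENNReal.ofReal (r ^ τ)} = 0 := by
    refine measure_mono_null hsub (measure_iUnion_null fun n => ?_)
    by_contra hne
    exact hτ.not_ge
      (le_upperHausdorffDim_of_measure_closedBall_le μ hne (by positivity) fun w hw => hw)
  filter_upwards [measure_eq_zero_iff_ae_notMem.1 hnull] with w hw
  simpa [Filter.not_eventually] using hw

theorem ae_eventually_rpow_le_measure_closedBall [SecondCountableTopology X]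
    (μ : Measure X) [IsProbabilityMeasure μ]
    (hloc : ∀ᵐ w ∂μ, ∃ c : ℝ, Tendsto
      (fun r : ℝ => Real.log (μ (closedBall w r)).toReal / Real.log r) (𝓝[>] 0) (𝓝 c))
    {τ : ℝ} (hτ : upperHausdorffDim μ < ENNReal.ofReal τ) :
    ∀ᵐ w ∂μ, ∀ᶠ r in 𝓝[>] 0, ENNReal.ofReal (r ^ τ) ≤ μ (closedBall w r) := by
  obtain ⟨τ₀, -, hτ₀, hτ₀τ⟩ := ENNReal.lt_iff_exists_real_btwn.1 hτ
  filter_upwards [hloc, ae_frequently_rpow_lt_measure_closedBall μ hτ₀, μ.support_mem_ae]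
    with w ⟨c, hc⟩ hfreq hsupp
  have hcτ₀ : c ≤ τ₀ := le_of_tendsto_log_div_log_of_frequently hc (fun _ => ENNReal.toReal_nonneg)
    ((hfreq.and_eventually self_mem_nhdsWithin).mono fun r ⟨hr, hr0⟩ =>
      ((ENNReal.ofReal_lt_iff_lt_toReal (Real.rpow_nonneg (le_of_lt hr0) _)
        (measure_ne_top μ _)).1 hr).le)
  -- Since `Real.log 0 = 0`, a null ball would give the ratio `0`; `w ∈ μ.support` excludes this.
  have hpos : ∀ᶠ r in 𝓝[>] 0, 0 < (μ (closedBall w r)).toReal := by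
    filter_upwards [self_mem_nhdsWithin] with r hr
    exact ENNReal.toReal_pos ((μ.mem_support_iff_forall w).1 hsupp _ (closedBall_mem_nhds w hr)).ne'
      (measure_ne_top μ _)
  filter_upwards [eventually_rpow_lt_of_tendsto_log_div_log hc hpos
    (hcτ₀.trans_lt ((ENNReal.ofReal_lt_ofReal_iff'.1 hτ₀τ).1))] with r hr
  exact ENNReal.ofReal_le_of_le_toReal hr.le

end MassDistribution

theorem exists_lt_measure_closedBall_inter_setOf_forall {X : Type*} [PseudoMetricSpace X]
    [MeasurableSpace X] (μ : Measure X) {P : X → ℝ → Prop}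
    (h : ∀ᵐ w ∂μ, ∀ᶠ r in 𝓝[>] 0, P w r) (x₀ : X) {m : ℝ≥0∞} (hm : m < μ univ) :
    ∃ N : ℕ, m < μ (closedBall x₀ N ∩ {w | ∀ r ∈ Ioo 0 (1 / (N + 1 : ℝ)), P w r}) := by
  set A : ℕ → Set X := fun N => closedBall x₀ N ∩ {w | ∀ r ∈ Ioo 0 (1 / (N + 1 : ℝ)), P w r}
  have hmono : Monotone A := by
    intro N M hNM w ⟨hw, hP⟩
    have hNM' : (N : ℝ) ≤ M := by exact_mod_cast hNM
    refine ⟨closedBall_subset_closedBall hNM' hw, fun r hr => hP r ⟨hr.1, hr.2.trans_le ?_⟩⟩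
    gcongr
  have hcover : ⋃ N, A N ∈ ae μ := by
    filter_upwards [h] with w hw
    obtain ⟨u, hu, hsub⟩ := mem_nhdsGT_iff_exists_Ioo_subset.1 hw
    obtain ⟨n, hn⟩ := exists_nat_one_div_lt (mem_Ioi.1 hu)
    refine mem_iUnion.2 ⟨max n ⌈dist w x₀⌉₊, ?_, fun r hr => hsub ⟨hr.1, hr.2.trans_le ?_⟩⟩
    · exact mem_closedBall.2 ((Nat.le_ceil _).trans (by exact_mod_cast le_max_right _ _))
    · refine le_trans ?_ hn.le
      gcongr
      exact_mod_cast le_max_left _ _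
  have hlim := tendsto_measure_iUnion_atTop (μ := μ) hmono
  rw [measure_congr (eventuallyEq_univ.2 hcover)] at hlim
  exact (hlim.eventually (lt_mem_nhds hm)).exists

section Minkowski

variable {X : Type*} [PseudoMetricSpace X]

theorem coveringNumber_le_externalCoveringNumber {δ : ℝ} (hδ : 0 ≤ δ) (A : Set X) :
    (coveringNumber δ A : ℕ∞) ≤ Metric.externalCoveringNumber (δ / 2).toNNReal A := by
  refine le_iInf₂ fun C hC => ?_
  rcases C.finite_or_infinite with hfin | hinf
  · rw [← hfin.coe_toFinset, encard_coe_eq_coe_finsetCard, Nat.cast_le]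
    refine Nat.sInf_le ⟨hfin.toFinset, rfl, ?_⟩
    rw [Metric.isCover_iff_subset_iUnion_closedBall, Real.coe_toNNReal _ (by positivity)] at hC
    simpa using hC
  · simp [hinf.encard_eq]

theorem packingNumber_mul_le_measure_univ [MeasurableSpace X] [OpensMeasurableSpace X]
    (μ : Measure X) {A : Set X} {ε : ℝ≥0} {m : ℝ≥0∞}
    (hA : ∀ x ∈ A, m ≤ μ (closedBall x (ε / 2))) :
    (Metric.packingNumber ε A : ℝ≥0∞) * m ≤ μ univ := by
  simp only [Metric.packingNumber, ENat.toENNReal_iSup, ENNReal.iSup_mul]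
  refine iSup₂_le fun C hCA => iSup_le fun hC => ?_
  have hdisj : Pairwise fun x y : C =>
      Disjoint (closedBall (x : X) (ε / 2)) (closedBall y (ε / 2)) := by
    intro x y hxy
    refine closedBall_disjoint_closedBall ?_
    have : (ε : ℝ≥0∞) < edist (x : X) y := hC x.2 y.2 (Subtype.coe_ne_coe.2 hxy)
    rw [edist_dist, ENNReal.lt_ofReal_iff_toReal_lt ENNReal.coe_ne_top] at this
    simpa using this
  calc (C.encard : ℝ≥0∞) * m = ∑' _ : C, m := by rw [ENNReal.tsum_const]; rfl
    _ ≤ ∑' x : C, μ (closedBall x (ε / 2)) := ENNReal.tsum_le_tsum fun x => hA x (hCA x.2)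
    _ ≤ μ (⋃ x : C, closedBall x (ε / 2)) :=
      tsum_meas_le_meas_iUnion_of_disjoint μ (fun _ => measurableSet_closedBall) hdisj
    _ ≤ μ univ := measure_mono (subset_univ _)

theorem coveringNumber_mul_rpow_le_measureReal_univ [MeasurableSpace X] [OpensMeasurableSpace X]
    (μ : Measure X) [IsFiniteMeasure μ] {A : Set X} {τ c δ : ℝ}
    (hA : ∀ x ∈ A, ∀ r ∈ Ioo 0 c, ENNReal.ofReal (r ^ τ) ≤ μ (closedBall x r))
    (hδ : δ ∈ Ioo 0 (4 * c)) : (coveringNumber δ A : ℝ) * (δ / 4) ^ τ ≤ μ.real univ := by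
  have hball : ∀ x ∈ A, ENNReal.ofReal ((δ / 4) ^ τ) ≤ μ (closedBall x ((δ / 2).toNNReal / 2)) := by
    intro x hx
    rw [Real.coe_toNNReal _ (by linarith [hδ.1]), div_div, show (2 : ℝ) * 2 = 4 by norm_num]
    exact hA x hx (δ / 4) ⟨by linarith [hδ.1], by linarith [hδ.2]⟩
  have hcard : (coveringNumber δ A : ℕ∞) ≤ Metric.packingNumber (δ / 2).toNNReal A :=
    (coveringNumber_le_externalCoveringNumber hδ.1.le A).trans <|
      (Metric.externalCoveringNumber_le_coveringNumber _ _).trans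
        (Metric.coveringNumber_le_packingNumber _ _)
  have key : (coveringNumber δ A : ℝ≥0∞) * ENNReal.ofReal ((δ / 4) ^ τ) ≤ μ univ :=
    calc (coveringNumber δ A : ℝ≥0∞) * ENNReal.ofReal ((δ / 4) ^ τ)
        ≤ (Metric.packingNumber (δ / 2).toNNReal A : ℝ≥0∞) * ENNReal.ofReal ((δ / 4) ^ τ) := by
          gcongr
          rw [← ENat.toENNReal_coe]
          exact ENat.toENNReal_le.2 hcard
      _ ≤ μ univ := packingNumber_mul_le_measure_univ μ hball
  have := ENNReal.toReal_mono (measure_ne_top μ univ) key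
  rwa [ENNReal.toReal_mul, ENNReal.toReal_natCast,
    ENNReal.toReal_ofReal (Real.rpow_nonneg (by linarith [hδ.1]) _)] at this

theorem upperMinkowskiDim_le_of_coveringNumber_mul_rpow_le {A : Set X} {τ C : ℝ}
    (h : ∀ᶠ δ in 𝓝[>] 0, (coveringNumber δ A : ℝ) * δ ^ τ ≤ C) :
    upperMinkowskiDim A ≤ ENNReal.ofReal τ := by
  have hL : Tendsto (fun δ : ℝ => Real.log (1 / δ)) (𝓝[>] 0) atTop := by
    simp only [one_div]
    exact Real.tendsto_log_atTop.comp tendsto_inv_nhdsGT_zero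
  have hlim : Tendsto (fun δ => ENNReal.ofReal (τ + Real.log C / Real.log (1 / δ))) (𝓝[>] 0)
      (𝓝 (ENNReal.ofReal τ)) := by
    have := (tendsto_const_nhds (x := Real.log C) |>.div_atTop hL).const_add τ
    rw [add_zero] at this
    exact (ENNReal.continuous_ofReal.tendsto τ).comp this
  refine (limsup_le_limsup ?_).trans_eq hlim.limsup_eq
  filter_upwards [h, Ioo_mem_nhdsGT one_pos] with δ hδ ⟨hδ0, hδ1⟩
  rcases (coveringNumber δ A).eq_zero_or_pos with h0 | hpos
  · simp [h0]
  refine ENNReal.ofReal_le_ofReal ?_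
  set L := Real.log (1 / δ)
  have hL0 : 0 < L := Real.log_pos (one_lt_one_div hδ0 hδ1)
  have hlogδ : Real.log δ = -L := by simp [L, Real.log_inv]
  have hlog : Real.log (coveringNumber δ A) + τ * Real.log δ ≤ Real.log C := by
    rw [← Real.log_rpow hδ0, ← Real.log_mul (by positivity) (by positivity)]
    exact Real.log_le_log (by positivity) hδ
  rw [hlogδ] at hlog
  rw [div_le_iff₀ hL0, add_mul, div_mul_cancel₀ _ hL0.ne']
  linarith

theorem upperMinkowskiDim_le_of_rpow_le_measure_closedBall [MeasurableSpace X]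
    [OpensMeasurableSpace X] (μ : Measure X) [IsFiniteMeasure μ] {A : Set X} {τ c : ℝ}
    (hc : 0 < c) (hA : ∀ x ∈ A, ∀ r ∈ Ioo 0 c, ENNReal.ofReal (r ^ τ) ≤ μ (closedBall x r)) :
    upperMinkowskiDim A ≤ ENNReal.ofReal τ := by
  refine upperMinkowskiDim_le_of_coveringNumber_mul_rpow_le (C := 4 ^ τ * μ.real univ) ?_
  filter_upwards [Ioo_mem_nhdsGT (by positivity : (0 : ℝ) < 4 * c)] with δ hδ
  have := coveringNumber_mul_rpow_le_measureReal_univ μ hA hδ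
  rwa [Real.div_rpow hδ.1.le (by norm_num), mul_div_assoc', div_le_iff₀ (by positivity),
    mul_comm (μ.real univ)] at this

end Minkowski

/-- Proposition 1: if the local dimension
`lim_{r→0} log μ(B(w,r))/log r` exists for `μ`-almost every `w`, then for every
`ε > 0` and every `δ ∈ (0,1]` there is a bounded Borel set `A` with
`μ(A) ≥ 1 − δ` and `dim̄_M A ≤ dim̄_H μ + ε`. -/
theorem exists_almost_full_measure_set_of_small_minkowski_dim
    (d : ℕ) (μ : Measure (EuclideanSpace ℝ (Fin d))) [IsProbabilityMeasure μ]
    (hloc : ∀ᵐ w ∂μ, ∃ c : ℝ, Tendsto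
      (fun r : ℝ => Real.log (μ (Metric.closedBall w r)).toReal / Real.log r)
      (nhdsWithin 0 (Set.Ioi 0)) (nhds c))
    (ε : ℝ) (hε : 0 < ε) (δ : ℝ) (hδ : δ ∈ Set.Ioc (0 : ℝ) 1) :
    ∃ A : Set (EuclideanSpace ℝ (Fin d)), MeasurableSet A ∧ Bornology.IsBounded A ∧
      ENNReal.ofReal (1 - δ) ≤ μ A ∧
      upperMinkowskiDim A ≤ upperHausdorffDim μ + ENNReal.ofReal ε := by
  have hfin : upperHausdorffDim μ ≠ ⊤ := ne_top_of_le_ne_top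
    (by simp [Real.dimH_univ_eq_finrank]) (upperHausdorffDim_le_dimH_univ μ)
  set τ := (upperHausdorffDim μ).toReal + ε
  have hτ : upperHausdorffDim μ + ENNReal.ofReal ε = ENNReal.ofReal τ := by
    rw [ENNReal.ofReal_add ENNReal.toReal_nonneg hε.le, ENNReal.ofReal_toReal hfin]
  have hdim : upperHausdorffDim μ < ENNReal.ofReal τ :=
    hτ ▸ ENNReal.lt_add_right hfin (by simpa using hε)
  obtain ⟨N, hN⟩ := exists_lt_measure_closedBall_inter_setOf_forall μ
    (ae_eventually_rpow_le_measure_closedBall μ hloc hdim) 0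
    (m := ENNReal.ofReal (1 - δ)) (by simpa using hδ.1)
  refine ⟨_, ?_, isBounded_closedBall.subset inter_subset_left, hN.le, ?_⟩
  · exact measurableSet_closedBall.inter
      (isClosed_setOf_forall_le_measure_closedBall μ _ _).measurableSet
  · rw [hτ]
    exact upperMinkowskiDim_le_of_rpow_le_measure_closedBall μ (by positivity) fun x hx => hx.2
end

section
/- Consider the regularized least squares loss ℓ(w,(a,y)) = (aᵀw − y)²/2 + λ‖w‖²/2 on ℝ^d with λ > 0, data points z_i = (a_i, y_i) for i = 1,…,n, and R := max_i ‖a_i‖ < ∞. Assume the step-size satisfies 0 < η < 1/(R² + λ). Let μ be any Borel probability measure on ℝ^d invariant under the SGD iterated function system with batch size b (so m_b = n/b batches). Then dim̄_H μ ≤ log(n/b) / log(1/(1 − ηλ)). -/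
/-!
Each SGD step is affine with linear part `(1 - ηλ) I - (η / b) ∑ⱼ aⱼ aⱼᵀ`. Writing
`v = (η / b) ∑ⱼ ⟪aⱼ, w⟫ aⱼ`, Cauchy–Schwarz gives `‖v‖² ≤ η R² ⟪w, v⟫ ≤ 2 (1 - ηλ) ⟪w, v⟫`, and
expanding `‖(1 - ηλ) w - v‖²` shows that every step is a contraction with ratio `r = 1 - ηλ`.

For an iterated function system of `m` maps with ratio `r < 1`, every large enough closed ball `B`
is mapped into itself, so the images `Hᵏ B` under the Hutchinson operator `H s = ⋃ᵢ hᵢ '' s`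
decrease, and by invariance each keeps at least the mass `μ B`. The set `Hᵏ B` is covered by `mᵏ`
sets of diameter at most `rᵏ diam B`, so `⋂ₖ Hᵏ B` has Hausdorff dimension at most
`log m / log (1 / r)`. Exhausting the space by such balls gives a set of full measure with the same
bound, and `m = n / b`.
-/

open MeasureTheory Filter Set Finset
open scoped ENNReal NNReal RealInnerProductSpace Topology

section LeastSquares

variable {E : Type*} [NormedAddCommGroup E] [InnerProductSpace ℝ E]

theorem hasGradientAt_leastSquares [CompleteSpace E] (a w : E) (y lam : ℝ) :
    HasGradientAt (fun w' : E => (⟪a, w'⟫ - y) ^ 2 / 2 + lam * ‖w'‖ ^ 2 / 2)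
      ((⟪a, w⟫ - y) • a + lam • w) w := by
  have hres : HasFDerivAt (fun w' : E => ⟪a, w'⟫ - y) (innerSL ℝ a) w :=
    (innerSL ℝ a).hasFDerivAt.sub_const y
  have hloss := ((hres.pow 2).add ((hasFDerivAt_id w).norm_sq.const_mul lam)).mul_const (2⁻¹ : ℝ)
  rw [hasGradientAt_iff_hasFDerivAt]
  refine (hloss.congr_fderiv ?_).congr_of_eventuallyEq (Eventually.of_forall fun w' => ?_)
  · ext u
    simp only [Nat.add_one_sub_one, pow_one, nsmul_eq_mul, Nat.cast_ofNat, id_eq,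
      ContinuousLinearMap.comp_id, smul_add, add_apply, smul_apply, coe_innerSL_apply,
      smul_eq_mul, map_add, map_smul, InnerProductSpace.toDual_apply_apply]
    ring
  · simp only [Pi.add_apply, id]
    ring

theorem norm_sq_sum_smul_le {ι F : Type*} [SeminormedAddCommGroup F] [NormedSpace ℝ F]
    (s : Finset ι) (c : ι → ℝ) (v : ι → F) {R : ℝ} (hv : ∀ j ∈ s, ‖v j‖ ≤ R) :
    ‖∑ j ∈ s, c j • v j‖ ^ 2 ≤ #s * R ^ 2 * ∑ j ∈ s, c j ^ 2 := by
  have hnorm : ‖∑ j ∈ s, c j • v j‖ ≤ (∑ j ∈ s, |c j|) * R := by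
    rw [Finset.sum_mul]
    refine (norm_sum_le _ _).trans (Finset.sum_le_sum fun j hj => ?_)
    rw [norm_smul, Real.norm_eq_abs]
    exact mul_le_mul_of_nonneg_left (hv j hj) (abs_nonneg _)
  calc ‖∑ j ∈ s, c j • v j‖ ^ 2 ≤ ((∑ j ∈ s, |c j|) * R) ^ 2 :=
        pow_le_pow_left₀ (norm_nonneg _) hnorm 2
    _ = R ^ 2 * (∑ j ∈ s, |c j|) ^ 2 := by ring
    _ ≤ R ^ 2 * (#s * ∑ j ∈ s, |c j| ^ 2) :=
        mul_le_mul_of_nonneg_left sq_sum_le_card_mul_sum_sq (sq_nonneg R)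
    _ = #s * R ^ 2 * ∑ j ∈ s, c j ^ 2 := by simp only [sq_abs]; ring

theorem norm_smul_sub_le_of_sq_norm_le_inner {r : ℝ} (hr : 0 ≤ r) {v w : E}
    (h : ‖v‖ ^ 2 ≤ 2 * r * ⟪w, v⟫) : ‖r • w - v‖ ≤ r * ‖w‖ := by
  refine pow_le_pow_iff_left₀ (norm_nonneg _) (by positivity) two_ne_zero |>.mp ?_
  rw [norm_sub_sq_real, real_inner_smul_left, norm_smul, Real.norm_of_nonneg hr]
  nlinarith

variable {ι : Type*} (s : Finset ι) (a : ι → E)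

theorem norm_smul_sub_smul_sum_inner_smul_le {R η r : ℝ} (ha : ∀ j ∈ s, ‖a j‖ ≤ R)
    (hη : 0 ≤ η) (hr : η * R ^ 2 ≤ r) (w : E) :
    ‖r • w - (η / #s) • ∑ j ∈ s, ⟪a j, w⟫ • a j‖ ≤ r * ‖w‖ := by
  set t := η / #s
  set S := ∑ j ∈ s, ⟪a j, w⟫ ^ 2
  have ht : 0 ≤ t := by positivity
  have hts : t * #s ≤ η := by
    rcases (#s).eq_zero_or_pos with hs | hs
    · simpa [hs] using hη
    · exact (div_mul_cancel₀ η (by positivity)).le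
  have hinner : ⟪w, ∑ j ∈ s, ⟪a j, w⟫ • a j⟫ = S := by
    simp only [inner_sum, real_inner_smul_right, real_inner_comm w, S, sq]
  refine norm_smul_sub_le_of_sq_norm_le_inner ((by positivity : 0 ≤ η * R ^ 2).trans hr) ?_
  calc ‖t • ∑ j ∈ s, ⟪a j, w⟫ • a j‖ ^ 2 = t ^ 2 * ‖∑ j ∈ s, ⟪a j, w⟫ • a j‖ ^ 2 := by
        rw [norm_smul, mul_pow, Real.norm_eq_abs, sq_abs]
    _ ≤ t ^ 2 * (#s * R ^ 2 * S) := by gcongr; exact norm_sq_sum_smul_le s _ a ha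
    _ = t * (t * #s) * R ^ 2 * S := by ring
    _ ≤ t * η * R ^ 2 * S := by gcongr
    _ ≤ t * (2 * r) * S := by
        have hS : 0 ≤ S := Finset.sum_nonneg fun j _ => sq_nonneg _
        rw [mul_assoc t η]
        gcongr t * ?_ * S
        linarith [(by positivity : 0 ≤ η * R ^ 2)]
    _ = 2 * r * ⟪w, t • ∑ j ∈ s, ⟪a j, w⟫ • a j⟫ := by rw [real_inner_smul_right, hinner]; ring

theorem lipschitzWith_leastSquares_sgdStep (y : ι → ℝ) {R η lam : ℝ} (ha : ∀ j ∈ s, ‖a j‖ ≤ R)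
    (hη : 0 ≤ η) (hstep : η * (R ^ 2 + lam) ≤ 1) :
    LipschitzWith (1 - η * lam).toNNReal
      fun w => (1 - η * lam) • w - (η / #s) • ∑ j ∈ s, (⟪a j, w⟫ - y j) • a j := by
  have hr : η * R ^ 2 ≤ 1 - η * lam := by linarith
  refine LipschitzWith.of_dist_le_mul fun u v => ?_
  rw [Real.coe_toNNReal _ ((by positivity : 0 ≤ η * R ^ 2).trans hr), dist_eq_norm u v]
  calc _ = ‖(1 - η * lam) • (u - v) - (η / #s) • ∑ j ∈ s, ⟪a j, u - v⟫ • a j‖ := by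
        rw [dist_eq_norm]
        congr 1
        simp only [inner_sub_right, sub_smul, Finset.sum_sub_distrib]
        module
    _ ≤ _ := norm_smul_sub_smul_sum_inner_smul_le s a ha hη hr (u - v)

theorem sub_smul_sum_gradient_leastSquares [CompleteSpace E] (y : ι → ℝ) (η lam : ℝ)
    (hs : #s ≠ 0) (w : E) :
    w - (η / #s) • ∑ j ∈ s, gradient (fun w' => (⟪a j, w'⟫ - y j) ^ 2 / 2 + lam * ‖w'‖ ^ 2 / 2) w
      = (1 - η * lam) • w - (η / #s) • ∑ j ∈ s, (⟪a j, w⟫ - y j) • a j := by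
  simp only [fun j => (hasGradientAt_leastSquares (a j) w (y j) lam).gradient,
    Finset.sum_add_distrib, Finset.sum_const, smul_add, ← Nat.cast_smul_eq_nsmul ℝ, smul_smul]
  rw [show η / #s * (#s * lam) = η * lam by field_simp]
  module

end LeastSquares

theorem mul_rpow_lt_one_of_log_div_log_inv_lt {m r d : ℝ} (hm : 0 < m) (hr0 : 0 < r)
    (hr1 : r < 1) (h : Real.log m / Real.log (1 / r) < d) : m * r ^ d < 1 := by
  have hlog : 0 < Real.log (1 / r) :=
    Real.log_pos (by rw [one_div]; exact one_lt_inv₀ hr0 |>.2 hr1)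
  rw [div_lt_iff₀ hlog, one_div, Real.log_inv] at h
  rw [← Real.log_neg_iff (by positivity), Real.log_mul hm.ne' (by positivity),
    Real.log_rpow hr0]
  linarith

theorem LipschitzWith.mapsTo_closedBall_self {X : Type*} [PseudoMetricSpace X] {f : X → X}
    {r : ℝ≥0} (hf : LipschitzWith r f) {x : X} {ρ : ℝ} (hx : dist (f x) x ≤ (1 - r) * ρ) :
    MapsTo f (Metric.closedBall x ρ) (Metric.closedBall x ρ) := fun y hy => by
  rw [Metric.mem_closedBall] at hy ⊢
  calc dist (f y) x ≤ dist (f y) (f x) + dist (f x) x := dist_triangle _ _ _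
    _ ≤ r * dist y x + (1 - r) * ρ := add_le_add (hf.dist_le_mul y x) hx
    _ ≤ r * ρ + (1 - r) * ρ := by gcongr
    _ = ρ := by ring

section Hutchinson

variable {ι X : Type*}

def hutchinson (f : ι → X → X) (s : Set X) : Set X := ⋃ i, f i '' s

variable {f : ι → X → X}

theorem hutchinson_mono : Monotone (hutchinson f) := fun _ _ hst =>
  iUnion_mono fun _ => image_mono hst

theorem hutchinson_subset_iff {s t : Set X} : hutchinson f s ⊆ t ↔ ∀ i, MapsTo (f i) s t := by
  simp only [hutchinson, iUnion_subset_iff, mapsTo_iff_image_subset]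

theorem antitone_iterate_hutchinson {B : Set X} (hB : ∀ i, MapsTo (f i) B B) :
    Antitone fun k => (hutchinson f)^[k] B :=
  antitone_nat_of_succ_le fun k => by
    rw [Function.iterate_succ_apply]
    exact hutchinson_mono.iterate k (hutchinson_subset_iff.2 hB)

theorem IsCompact.iterate_hutchinson [Finite ι] [TopologicalSpace X] (hf : ∀ i, Continuous (f i))
    {B : Set X} (hB : IsCompact B) (k : ℕ) : IsCompact ((hutchinson f)^[k] B) := by
  induction k with
  | zero => exact hB
  | succ k ih =>
    rw [Function.iterate_succ_apply']
    exact isCompact_iUnion fun i => ih.image (hf i)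

theorem exists_cover_iterate_hutchinson [PseudoEMetricSpace X] {r : ℝ≥0}
    (hf : ∀ i, LipschitzWith r (f i)) (s : Set X) (k : ℕ) :
    ∃ t : (Fin k → ι) → Set X, (hutchinson f)^[k] s ⊆ ⋃ w, t w ∧
      ∀ w, Metric.ediam (t w) ≤ r ^ k * Metric.ediam s := by
  induction k with
  | zero => exact ⟨fun _ => s, subset_iUnion_of_subset Fin.elim0 subset_rfl, by simp⟩
  | succ k ih =>
    obtain ⟨t, hcover, hdiam⟩ := ih
    refine ⟨fun w => f (w 0) '' t (Fin.tail w), ?_, fun w => ?_⟩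
    · rw [Function.iterate_succ_apply', hutchinson_subset_iff]
      intro i x hx
      obtain ⟨w, hw⟩ := mem_iUnion.1 (hcover hx)
      exact mem_iUnion.2 ⟨Fin.cons i w, by simpa using mem_image_of_mem (f i) hw⟩
    · calc Metric.ediam (f (w 0) '' t (Fin.tail w)) ≤ r * Metric.ediam (t (Fin.tail w)) :=
            (hf (w 0)).ediam_image_le _
        _ ≤ r * (r ^ k * Metric.ediam s) := by gcongr; exact hdiam _
        _ = r ^ (k + 1) * Metric.ediam s := by ring

end Hutchinson

section Dimension

variable {ι X : Type*} [Fintype ι] [EMetricSpace X]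

theorem hausdorffMeasure_eq_zero_of_geometric_cover [MeasurableSpace X] [BorelSpace X] {s : Set X}
    {c : ℝ≥0∞} (hc : c ≠ ∞) {r : ℝ≥0} (hr : r < 1) {d : ℝ≥0}
    (hq : (Fintype.card ι : ℝ≥0∞) * (r : ℝ≥0∞) ^ (d : ℝ) < 1)
    (hcover : ∀ k, ∃ t : (Fin k → ι) → Set X, s ⊆ ⋃ w, t w ∧
      ∀ w, Metric.ediam (t w) ≤ c * r ^ k) :
    μH[d] s = 0 := by
  choose t hst hdiam using hcover
  set q := (Fintype.card ι : ℝ≥0∞) * (r : ℝ≥0∞) ^ (d : ℝ)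
  have hsum : ∀ k, ∑ w, Metric.ediam (t k w) ^ (d : ℝ) ≤ c ^ (d : ℝ) * q ^ k := fun k =>
    calc ∑ w, Metric.ediam (t k w) ^ (d : ℝ) ≤ ∑ _w : Fin k → ι, (c * r ^ k) ^ (d : ℝ) :=
          Finset.sum_le_sum fun w _ => ENNReal.rpow_le_rpow (hdiam k w) d.coe_nonneg
      _ = c ^ (d : ℝ) * q ^ k := by
          rw [Finset.sum_const, Finset.card_univ, Fintype.card_fun, Fintype.card_fin, nsmul_eq_mul,
            ENNReal.mul_rpow_of_nonneg _ _ d.coe_nonneg, ← ENNReal.rpow_natCast,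
            ← ENNReal.rpow_mul, mul_comm (k : ℝ), ENNReal.rpow_mul, ENNReal.rpow_natCast, mul_pow]
          push_cast
          ring
  have hgeom : Tendsto (fun k => c ^ (d : ℝ) * q ^ k) atTop (𝓝 0) := by
    simpa using ENNReal.Tendsto.const_mul (ENNReal.tendsto_pow_atTop_nhds_zero_of_lt_one hq)
      (Or.inr (ENNReal.rpow_ne_top_of_nonneg d.coe_nonneg hc))
  have hradius : Tendsto (fun k => c * (r : ℝ≥0∞) ^ k) atTop (𝓝 0) := by
    simpa using ENNReal.Tendsto.const_mul
      (ENNReal.tendsto_pow_atTop_nhds_zero_of_lt_one (ENNReal.coe_lt_one_iff.2 hr)) (Or.inr hc)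
  refine le_antisymm ?_ zero_le
  calc μH[d] s ≤ liminf (fun k => ∑ w, Metric.ediam (t k w) ^ (d : ℝ)) atTop :=
        Measure.hausdorffMeasure_le_liminf_sum _ s _ hradius t
          (Eventually.of_forall hdiam) (Eventually.of_forall hst)
    _ ≤ liminf (fun k => c ^ (d : ℝ) * q ^ k) atTop :=
        liminf_le_liminf (Eventually.of_forall hsum)
    _ = 0 := hgeom.liminf_eq

theorem dimH_le_of_geometric_cover [Nonempty ι] {s : Set X} {c : ℝ≥0∞} (hc : c ≠ ∞)
    {r : ℝ≥0} (hr0 : 0 < r) (hr1 : r < 1)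
    (hcover : ∀ k, ∃ t : (Fin k → ι) → Set X, s ⊆ ⋃ w, t w ∧
      ∀ w, Metric.ediam (t w) ≤ c * r ^ k) :
    dimH s ≤ ENNReal.ofReal (Real.log (Fintype.card ι) / Real.log (1 / r)) := by
  borelize X
  refine dimH_le fun d hd => le_of_not_gt fun hlt => ?_
  have hdim : Real.log (Fintype.card ι) / Real.log (1 / r) < d := lt_of_not_ge fun hle =>
    hlt.not_ge (by simpa using ENNReal.ofReal_le_ofReal hle)
  have hq : (Fintype.card ι : ℝ≥0∞) * (r : ℝ≥0∞) ^ (d : ℝ) < 1 := by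
    rw [← ENNReal.coe_natCast, ← ENNReal.coe_rpow_of_ne_zero hr0.ne', ← ENNReal.coe_mul,
      ← ENNReal.coe_one, ENNReal.coe_lt_coe, ← NNReal.coe_lt_coe]
    push_cast
    exact mul_rpow_lt_one_of_log_div_log_inv_lt (by exact_mod_cast Fintype.card_pos) hr0 hr1 hdim
  simp [hausdorffMeasure_eq_zero_of_geometric_cover hc hr1 hq hcover] at hd

end Dimension

section InvariantMeasure

variable {ι X : Type*} [Fintype ι] [MeasurableSpace X]

theorem measure_le_measure_hutchinson {f : ι → X → X} (hf : ∀ i, Measurable (f i))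
    {p : ι → ℝ≥0∞} (hp : ∑ i, p i = 1) {μ : Measure X} (hμ : μ = ∑ i, p i • μ.map (f i))
    {s : Set X} (hs : MeasurableSet (hutchinson f s)) : μ s ≤ μ (hutchinson f s) :=
  calc μ s = ∑ i, p i * μ s := by rw [← Finset.sum_mul, hp, one_mul]
    _ ≤ ∑ i, p i * μ (f i ⁻¹' hutchinson f s) := by
        gcongr with i
        exact fun x hx => mem_iUnion.2 ⟨i, mem_image_of_mem _ hx⟩
    _ = μ (hutchinson f s) := by
        conv_rhs => rw [hμ]
        simp only [Measure.coe_finsetSum, Finset.sum_apply, Measure.smul_apply, smul_eq_mul,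
          Measure.map_apply (hf _) hs]

theorem upperHausdorffDim_le_of_forall_closedBall [MetricSpace X] {μ : Measure X}
    [IsProbabilityMeasure μ] (x : X) {D : ℝ≥0∞}
    (h : ∀ l : ℕ, ∃ A, MeasurableSet A ∧ μ (Metric.closedBall x l) ≤ μ A ∧ dimH A ≤ D) :
    upperHausdorffDim μ ≤ D := by
  choose A hAm hAμ hAdim using h
  have hball : Monotone fun l : ℕ => Metric.closedBall x l := fun _ _ hkl =>
    Metric.closedBall_subset_closedBall (Nat.cast_le.2 hkl)
  have hfull : μ (⋃ l, A l) = 1 := by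
    refine le_antisymm prob_le_one ?_
    calc 1 = μ (⋃ l : ℕ, Metric.closedBall x l) := by
          rw [Metric.iUnion_closedBall_nat, measure_univ]
      _ = ⨆ l : ℕ, μ (Metric.closedBall x l) := hball.measure_iUnion
      _ ≤ μ (⋃ l, A l) := iSup_le fun l => (hAμ l).trans (measure_mono (subset_iUnion A l))
  calc upperHausdorffDim μ ≤ dimH (⋃ l, A l) :=
        iInf_le_of_le _ (iInf_le_of_le (.iUnion hAm) (iInf_le _ hfull))
    _ = ⨆ l, dimH (A l) := dimH_iUnion A
    _ ≤ D := iSup_le hAdim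

theorem exists_measurableSet_dimH_le_of_isInvariant [Nonempty ι] [MetricSpace X] [BorelSpace X]
    {f : ι → X → X} {r : ℝ≥0} (hr0 : 0 < r) (hr1 : r < 1) (hf : ∀ i, LipschitzWith r (f i))
    {p : ι → ℝ≥0∞} (hp : ∑ i, p i = 1) {μ : Measure X} [IsFiniteMeasure μ]
    (hμ : μ = ∑ i, p i • μ.map (f i)) {B : Set X} (hB : IsCompact B)
    (hBf : ∀ i, MapsTo (f i) B B) :
    ∃ A, MeasurableSet A ∧ μ B ≤ μ A ∧
      dimH A ≤ ENNReal.ofReal (Real.log (Fintype.card ι) / Real.log (1 / r)) := by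
  have hK : ∀ k, IsCompact ((hutchinson f)^[k] B) :=
    hB.iterate_hutchinson fun i => (hf i).continuous
  refine ⟨⋂ k, (hutchinson f)^[k] B, .iInter fun k => (hK k).measurableSet, ?_, ?_⟩
  · rw [(antitone_iterate_hutchinson hBf).measure_iInter
      (fun k => (hK k).measurableSet.nullMeasurableSet) ⟨0, measure_ne_top _ _⟩]
    refine le_iInf fun k => ?_
    induction k with
    | zero => exact le_rfl
    | succ k ih =>
      have hmeas := (hK (k + 1)).measurableSet
      rw [Function.iterate_succ_apply'] at hmeas ⊢
      exact ih.trans (measure_le_measure_hutchinson (fun i => (hf i).continuous.measurable) hp hμ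
        hmeas)
  · refine dimH_le_of_geometric_cover hB.isBounded.ediam_ne_top hr0 hr1 fun k => ?_
    obtain ⟨t, hcover, hdiam⟩ := exists_cover_iterate_hutchinson hf B k
    exact ⟨t, (iInter_subset _ k).trans hcover, fun w => (hdiam w).trans_eq (mul_comm _ _)⟩

theorem upperHausdorffDim_le_of_isInvariant [MetricSpace X] [ProperSpace X] [BorelSpace X]
    {f : ι → X → X} {r : ℝ≥0} (hr0 : 0 < r) (hr1 : r < 1) (hf : ∀ i, LipschitzWith r (f i))
    {p : ι → ℝ≥0∞} (hp : ∑ i, p i = 1) (μ : Measure X) [IsProbabilityMeasure μ]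
    (hμ : μ = ∑ i, p i • μ.map (f i)) :
    upperHausdorffDim μ ≤ ENNReal.ofReal (Real.log (Fintype.card ι) / Real.log (1 / r)) := by
  have : Nonempty ι := by
    by_contra hι
    simp [not_nonempty_iff.1 hι] at hp
  obtain ⟨x⟩ := nonempty_of_isProbabilityMeasure μ
  set C := ∑ i, dist (f i x) x
  have hr : (0 : ℝ) < 1 - r := sub_pos.2 hr1
  refine upperHausdorffDim_le_of_forall_closedBall x fun l => ?_
  have hinv : ∀ i, MapsTo (f i) (Metric.closedBall x (C / (1 - r) + l))
      (Metric.closedBall x (C / (1 - r) + l)) := fun i =>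
    (hf i).mapsTo_closedBall_self <| calc
      dist (f i x) x ≤ C :=
        Finset.single_le_sum (f := fun j => dist (f j x) x) (fun _ _ => dist_nonneg) (mem_univ i)
      _ ≤ (1 - r) * (C / (1 - r) + l) := by
        rw [mul_add, mul_div_cancel₀ _ hr.ne']
        exact le_add_of_nonneg_right (by positivity)
  obtain ⟨A, hA, hμA, hdim⟩ := exists_measurableSet_dimH_le_of_isInvariant hr0 hr1 hf hp hμ
    (isCompact_closedBall x _) hinv
  refine ⟨A, hA, (measure_mono (Metric.closedBall_subset_closedBall ?_)).trans hμA, hdim⟩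
  exact le_add_of_nonneg_left (div_nonneg (Finset.sum_nonneg fun _ _ => dist_nonneg) hr.le)

end InvariantMeasure

theorem sgd_least_squares_hausdorff_dim_bound_general
    (d n b m : ℕ) (hb : 0 < b) (hnm : n = m * b)
    (a : Fin n → EuclideanSpace ℝ (Fin d)) (y : Fin n → ℝ)
    (lam R η : ℝ) (hlam : 0 < lam)
    (hR : ∀ i, ‖a i‖ ≤ R)
    (hη : 0 < η) (hη' : η < 1 / (R ^ 2 + lam))
    (ℓ : EuclideanSpace ℝ (Fin d) → EuclideanSpace ℝ (Fin d) × ℝ → ℝ)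
    (hℓ : ∀ w z, ℓ w z = (⟪z.1, w⟫ - z.2) ^ 2 / 2 + lam * ‖w‖ ^ 2 / 2)
    (S : Fin m → Finset (Fin n))
    (hcard : ∀ i, (S i).card = b)
    (p : Fin m → ℝ≥0∞) (hpsum : ∑ i, p i = 1)
    (h : Fin m → EuclideanSpace ℝ (Fin d) → EuclideanSpace ℝ (Fin d))
    (hdef : ∀ i w, h i w = w - (η / b) • ∑ j ∈ S i, gradient (fun w' => ℓ w' (a j, y j)) w)
    (μ : Measure (EuclideanSpace ℝ (Fin d))) [IsProbabilityMeasure μ]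
    (hinv : μ = ∑ i, p i • μ.map (h i)) :
    upperHausdorffDim μ ≤
      ENNReal.ofReal (Real.log ((n : ℝ) / (b : ℝ)) / Real.log (1 / (1 - η * lam))) := by
  have hstep : η * (R ^ 2 + lam) < 1 := (lt_div_iff₀ (by positivity)).1 hη'
  have hr : 0 < 1 - η * lam := by nlinarith [mul_nonneg hη.le (sq_nonneg R)]
  have hsgd : ∀ i, h i = fun w =>
      (1 - η * lam) • w - (η / #(S i)) • ∑ j ∈ S i, (⟪a j, w⟫ - y j) • a j := fun i =>
    funext fun w => by
      rw [hdef, ← hcard i]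
      simp only [hℓ]
      exact sub_smul_sum_gradient_leastSquares _ a y η lam (hcard i ▸ hb.ne') w
  have hlip : ∀ i, LipschitzWith (1 - η * lam).toNNReal (h i) := fun i =>
    hsgd i ▸ lipschitzWith_leastSquares_sgdStep _ a y (fun j _ => hR j) hη.le hstep.le
  have hm : (n : ℝ) / b = Fintype.card (Fin m) := by
    rw [hnm, Fintype.card_fin, Nat.cast_mul, mul_div_cancel_right₀ _ (by positivity)]
  rw [hm, ← Real.coe_toNNReal _ hr.le]
  exact upperHausdorffDim_le_of_isInvariant (Real.toNNReal_pos.2 hr)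
    (Real.toNNReal_lt_one.2 (by linarith [mul_pos hη hlam])) hlip hpsum μ hinv

/-- Least squares, SGD: for the regularized least squares loss
`ℓ(w,(a,y)) = (aᵀw − y)²/2 + λ‖w‖²/2` with step-size `0 < η < 1/(R² + λ)`,
any invariant measure `μ` of the SGD iterated function system with batch size `b`
(`m_b = n/b` batches) satisfies `dim̄_H μ ≤ log(n/b) / log(1/(1 − ηλ))`. -/
theorem sgd_least_squares_hausdorff_dim_bound
    (d n b m : ℕ) (hb : 0 < b) (hnm : n = m * b)
    (a : Fin n → EuclideanSpace ℝ (Fin d)) (y : Fin n → ℝ)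
    (lam R η : ℝ) (hlam : 0 < lam)
    (hR : ∀ i, ‖a i‖ ≤ R)
    (hη : 0 < η) (hη' : η < 1 / (R ^ 2 + lam))
    (ℓ : EuclideanSpace ℝ (Fin d) → EuclideanSpace ℝ (Fin d) × ℝ → ℝ)
    (hℓ : ∀ w z, ℓ w z = (⟪z.1, w⟫ - z.2) ^ 2 / 2 + lam * ‖w‖ ^ 2 / 2)
    (S : Fin m → Finset (Fin n))
    (hcard : ∀ i, (S i).card = b)
    (hdisj : ∀ i j, i ≠ j → Disjoint (S i) (S j))
    (hcover : ∀ j : Fin n, ∃ i, j ∈ S i)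
    (p : Fin m → ℝ≥0∞) (hp : ∀ i, 0 < p i) (hpsum : ∑ i, p i = 1)
    (h : Fin m → EuclideanSpace ℝ (Fin d) → EuclideanSpace ℝ (Fin d))
    (hdef : ∀ i w, h i w = w - (η / b) • ∑ j ∈ S i, gradient (fun w' => ℓ w' (a j, y j)) w)
    (μ : Measure (EuclideanSpace ℝ (Fin d))) [IsProbabilityMeasure μ]
    (hinv : μ = ∑ i, p i • μ.map (h i)) :
    upperHausdorffDim μ ≤
      ENNReal.ofReal (Real.log ((n : ℝ) / (b : ℝ)) / Real.log (1 / (1 - η * lam))) :=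
  sgd_least_squares_hausdorff_dim_bound_general d n b m hb hnm a y lam R η hlam hR hη hη' ℓ hℓ S
    hcard p hpsum h hdef μ hinv
end

section
/- Consider the non-convex robust regression loss ℓ(w,(a,y)) = ρ(y − ⟨w,a⟩) + λ_r‖w‖²/2 on ℝ^d, where ρ = ρ_exp is the exponential squared loss ρ_exp(t) = 1 − e^{−t²/t₀} with tuning parameter t₀ > 0, λ_r > 0, data points z_i = (a_i, y_i), and R := max_i ‖a_i‖ satisfying R < √(λ_r t₀ / 2). Assume the step-size satisfies 0 < η < 1/(λ_r + 2R²/t₀). Let μ be any Borel probability measure on ℝ^d invariant under the SGD iterated function system with batch size b (so m_b = n/b batches). Then dim̄_H μ ≤ log(n/b) / log(1/(1 − ηλ_r + 2ηR²/t₀)). -/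
open MeasureTheory Filter
open scoped ENNReal RealInnerProductSpace

/-!
Each mini-batch map `h i` is a contraction with ratio `L = 1 - ηλ + 2ηR²/t₀`: the regulariser
contributes `1 - ηλ`, and the derivative `t ↦ (2t/t₀) e^{-t²/t₀}` of the loss profile is
`(2/t₀)`-Lipschitz, which together with `‖a j‖ ≤ R` adds at most `2ηR²/t₀`.

For any iterated function system of `m` maps with common contraction ratio `L < 1`, every large
ball `B` is mapped into itself, and invariance of `μ` gives `μ B ≤ μ (Tᵏ B)` for the Hutchinson
operator `T E = ⋃ i, f i '' E`. So `μ` is carried by the union over radii of the compact sets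
`⋂ k, Tᵏ B`. Since `Tᵏ B` is covered by `mᵏ` sets of diameter at most `Lᵏ diam B`, these sets
are `μH[s]`-null as soon as `m Lˢ < 1`, i.e. they have dimension at most `log m / log (1/L)`.
Finally `m = n/b`.
-/

open Set Metric Real
open scoped NNReal Topology

theorem natCast_mul_rpow_lt_one {m : ℕ} {K s : ℝ} (hK0 : 0 < K) (hK1 : K < 1)
    (hs : Real.log m / Real.log (1 / K) < s) : m * K ^ s < 1 := by
  rcases Nat.eq_zero_or_pos m with rfl | hm
  · simp
  have hlog : 0 < Real.log (1 / K) := Real.log_pos (one_lt_one_div hK0 hK1)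
  rw [div_lt_iff₀ hlog, one_div, Real.log_inv] at hs
  have : Real.log (m * K ^ s) < 0 := by
    rw [Real.log_mul (by positivity) (by positivity), Real.log_rpow hK0]
    linarith
  exact (Real.log_neg_iff (by positivity)).1 this

theorem mapsTo_closedBall_of_lipschitzWith {X : Type*} [PseudoMetricSpace X] {g : X → X} {K : ℝ≥0}
    (hg : LipschitzWith K g) {x₀ : X} {r : ℝ} (hr : dist (g x₀) x₀ ≤ (1 - K) * r) :
    MapsTo g (closedBall x₀ r) (closedBall x₀ r) := fun x hx =>
  calc dist (g x) x₀ ≤ dist (g x) (g x₀) + dist (g x₀) x₀ := dist_triangle _ _ _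
    _ ≤ K * r + (1 - K) * r := by
      gcongr
      exact (hg.dist_le_mul x x₀).trans (by gcongr; exact hx)
    _ = r := by ring

theorem upperHausdorffDim_le_of_forall_closedBall_s5 {X : Type*} [MetricSpace X] [MeasurableSpace X]
    (μ : Measure X) [IsProbabilityMeasure μ] (x₀ : X) {D : ℝ≥0∞} {A : ℕ → Set X}
    (hA : ∀ n, MeasurableSet (A n)) (hAD : ∀ n, dimH (A n) ≤ D)
    (hμA : ∀ n : ℕ, μ (closedBall x₀ n) ≤ μ (A n)) : upperHausdorffDim μ ≤ D := by
  have hμ : μ (⋃ n, A n) = 1 := by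
    refine le_antisymm prob_le_one ?_
    have hmono : Monotone fun n : ℕ => closedBall x₀ n :=
      fun _ _ hmn => closedBall_subset_closedBall (Nat.cast_le.2 hmn)
    calc 1 = μ (⋃ n : ℕ, closedBall x₀ n) := by rw [iUnion_closedBall_nat, measure_univ]
      _ = ⨆ n : ℕ, μ (closedBall x₀ n) := hmono.measure_iUnion
      _ ≤ μ (⋃ n, A n) := iSup_le fun n => (hμA n).trans (measure_mono (subset_iUnion A n))
  calc upperHausdorffDim μ ≤ dimH (⋃ n, A n) :=
        iInf_le_of_le _ (iInf_le_of_le (MeasurableSet.iUnion hA) (iInf_le _ hμ))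
    _ = ⨆ n, dimH (A n) := dimH_iUnion A
    _ ≤ D := iSup_le hAD

namespace IFS

variable {X : Type*} {m : ℕ} (f : Fin m → X → X)

def hutchinson (E : Set X) : Set X := ⋃ i, f i '' E

def wordMap : {k : ℕ} → (Fin k → Fin m) → X → X
  | 0, _ => id
  | _ + 1, w => f (w 0) ∘ wordMap (Fin.tail w)

variable {f}

theorem hutchinson_mono : Monotone (hutchinson f) :=
  fun _ _ hEF => iUnion_mono fun _ => image_mono hEF

theorem iterate_hutchinson_antitone {B : Set X} (hB : hutchinson f B ⊆ B) :
    Antitone fun k => (hutchinson f)^[k] B :=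
  antitone_nat_of_succ_le fun k => by
    rw [Function.iterate_succ_apply]
    exact hutchinson_mono.iterate k hB

theorem iterate_hutchinson_subset_iUnion_wordMap (B : Set X) :
    ∀ k, (hutchinson f)^[k] B ⊆ ⋃ w : Fin k → Fin m, wordMap f w '' B
  | 0 => fun x hx => mem_iUnion.2 ⟨Fin.elim0, x, hx, rfl⟩
  | k + 1 => by
    rw [Function.iterate_succ_apply']
    rintro _ ⟨_, ⟨i, rfl⟩, z, hz, rfl⟩
    obtain ⟨w, x, hx, rfl⟩ := mem_iUnion.1 (iterate_hutchinson_subset_iUnion_wordMap B k hz)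
    exact mem_iUnion.2 ⟨Fin.cons i w, x, hx, by simp [wordMap]⟩

theorem isCompact_iterate_hutchinson [TopologicalSpace X] (hf : ∀ i, Continuous (f i))
    {B : Set X} (hB : IsCompact B) : ∀ k, IsCompact ((hutchinson f)^[k] B)
  | 0 => hB
  | k + 1 => by
    rw [Function.iterate_succ_apply']
    exact isCompact_iUnion fun i => (isCompact_iterate_hutchinson hf hB k).image (hf i)

theorem lipschitzWith_wordMap [PseudoEMetricSpace X] {K : ℝ≥0} (hf : ∀ i, LipschitzWith K (f i)) :
    ∀ {k} (w : Fin k → Fin m), LipschitzWith (K ^ k) (wordMap f w)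
  | 0, _ => LipschitzWith.id
  | k + 1, w => by
    rw [pow_succ']
    exact (hf (w 0)).comp (lipschitzWith_wordMap hf (Fin.tail w))

theorem subset_preimage_hutchinson (E : Set X) (i : Fin m) : E ⊆ f i ⁻¹' hutchinson f E :=
  fun x hx => mem_iUnion.2 ⟨i, x, hx, rfl⟩

section Measure

variable [MeasurableSpace X] {μ : Measure X} {p : Fin m → ℝ≥0∞}

theorem measure_le_measure_hutchinson (hf : ∀ i, AEMeasurable (f i) μ) (hp : ∑ i, p i = 1)
    (hμ : μ = ∑ i, p i • μ.map (f i)) (E : Set X) : μ E ≤ μ (hutchinson f E) :=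
  calc μ E = ∑ i, p i * μ E := by rw [← Finset.sum_mul, hp, one_mul]
    _ ≤ ∑ i, p i * μ.map (f i) (hutchinson f E) := by
      refine Finset.sum_le_sum fun i _ => mul_le_mul_right ?_ _
      exact (measure_mono (subset_preimage_hutchinson E i)).trans (Measure.le_map_apply (hf i) _)
    _ = μ (hutchinson f E) := by
      conv_rhs => rw [hμ]
      simp [Measure.finsetSum_apply]

theorem measure_le_measure_iInter_iterate_hutchinson [TopologicalSpace X] [T2Space X]
    [BorelSpace X] [IsFiniteMeasure μ] (hf : ∀ i, Continuous (f i))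
    (hp : ∑ i, p i = 1) (hμ : μ = ∑ i, p i • μ.map (f i)) {B : Set X} (hB : IsCompact B)
    (hBf : hutchinson f B ⊆ B) : μ B ≤ μ (⋂ k, (hutchinson f)^[k] B) := by
  have hmeas k := (isCompact_iterate_hutchinson hf hB k).isClosed.measurableSet
  rw [(iterate_hutchinson_antitone hBf).measure_iInter (fun k => (hmeas k).nullMeasurableSet)
    ⟨0, measure_ne_top μ _⟩]
  refine le_iInf fun k => ?_
  induction k with
  | zero => rfl
  | succ k ih =>
    rw [Function.iterate_succ_apply']
    exact ih.trans (measure_le_measure_hutchinson (fun i => (hf i).aemeasurable) hp hμ _)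

end Measure

theorem hausdorffMeasure_iInter_iterate_hutchinson_eq_zero [EMetricSpace X] [MeasurableSpace X]
    [BorelSpace X] {K : ℝ≥0} (hf : ∀ i, LipschitzWith K (f i)) (hK : K < 1) {B : Set X}
    (hB : ediam B ≠ ∞) {s : ℝ} (hs : 0 ≤ s) (hmK : (m : ℝ≥0∞) * (K : ℝ≥0∞) ^ s < 1) :
    μH[s] (⋂ k, (hutchinson f)^[k] B) = 0 := by
  have hdiam k (w : Fin k → Fin m) : ediam (wordMap f w '' B) ≤ (K : ℝ≥0∞) ^ k * ediam B := by
    simpa using (lipschitzWith_wordMap hf w).ediam_image_le B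
  have hsum k : ∑ w : Fin k → Fin m, ediam (wordMap f w '' B) ^ s
      ≤ ((m : ℝ≥0∞) * (K : ℝ≥0∞) ^ s) ^ k * ediam B ^ s :=
    calc ∑ w : Fin k → Fin m, ediam (wordMap f w '' B) ^ s
        ≤ ∑ _w : Fin k → Fin m, ((K : ℝ≥0∞) ^ k * ediam B) ^ s :=
          Finset.sum_le_sum fun w _ => ENNReal.rpow_le_rpow (hdiam k w) hs
      _ = ((m : ℝ≥0∞) * (K : ℝ≥0∞) ^ s) ^ k * ediam B ^ s := by
          rw [Finset.sum_const, Finset.card_univ, Fintype.card_fun, Fintype.card_fin,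
            Fintype.card_fin, nsmul_eq_mul, ENNReal.mul_rpow_of_nonneg _ _ hs,
            ← ENNReal.rpow_natCast, ← ENNReal.rpow_mul, mul_comm (k : ℝ), ENNReal.rpow_mul, ENNReal.rpow_natCast]
          push_cast
          ring
  have hradius : Tendsto (fun k : ℕ => (K : ℝ≥0∞) ^ k * ediam B) atTop (𝓝 0) := by
    simpa using ENNReal.Tendsto.mul_const
      (ENNReal.tendsto_pow_atTop_nhds_zero_of_lt_one (ENNReal.coe_lt_one_iff.2 hK)) (Or.inr hB)
  have hbound : Tendsto (fun k : ℕ => ((m : ℝ≥0∞) * (K : ℝ≥0∞) ^ s) ^ k * ediam B ^ s)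
      atTop (𝓝 0) := by
    simpa using ENNReal.Tendsto.mul_const (ENNReal.tendsto_pow_atTop_nhds_zero_of_lt_one hmK)
      (Or.inr (ENNReal.rpow_ne_top_of_nonneg hs hB))
  refine le_antisymm ?_ bot_le
  calc μH[s] (⋂ k, (hutchinson f)^[k] B)
      ≤ liminf (fun k => ∑ w : Fin k → Fin m, ediam (wordMap f w '' B) ^ s) atTop :=
        Measure.hausdorffMeasure_le_liminf_sum s _ _ hradius (fun k w => wordMap f w '' B)
          (Eventually.of_forall hdiam) (Eventually.of_forall fun k =>
            (iInter_subset _ k).trans (iterate_hutchinson_subset_iUnion_wordMap B k))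
    _ ≤ liminf (fun k => ((m : ℝ≥0∞) * (K : ℝ≥0∞) ^ s) ^ k * ediam B ^ s) atTop :=
        liminf_le_liminf (Eventually.of_forall hsum)
    _ = 0 := hbound.liminf_eq

theorem dimH_iInter_iterate_hutchinson_le [EMetricSpace X] {K : ℝ≥0}
    (hf : ∀ i, LipschitzWith K (f i)) (hK0 : 0 < K) (hK1 : K < 1) {B : Set X} (hB : ediam B ≠ ∞) :
    dimH (⋂ k, (hutchinson f)^[k] B) ≤ ENNReal.ofReal (Real.log m / Real.log (1 / K)) := by
  borelize X
  refine dimH_le fun s hs => le_of_not_gt fun hlt => ?_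
  have hK1' : (K : ℝ) < 1 := hK1
  rw [ENNReal.ofReal_lt_coe_iff (div_nonneg (by positivity) (Real.log_nonneg
    (by rw [one_div]; exact (one_le_inv₀ hK0).2 hK1'.le)))] at hlt
  have hmK : (m : ℝ≥0) * K ^ (s : ℝ) < 1 := by
    rw [← NNReal.coe_lt_coe]
    push_cast
    exact natCast_mul_rpow_lt_one hK0 hK1' hlt
  have hmK' : (m : ℝ≥0∞) * (K : ℝ≥0∞) ^ (s : ℝ) < 1 := by
    have := ENNReal.coe_lt_coe.2 hmK
    rwa [ENNReal.coe_mul, ENNReal.coe_rpow_of_nonneg _ s.coe_nonneg, ENNReal.coe_natCast,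
      ENNReal.coe_one] at this
  exact ENNReal.zero_ne_top
    ((hausdorffMeasure_iInter_iterate_hutchinson_eq_zero hf hK1 hB s.coe_nonneg hmK').symm.trans hs)

theorem upperHausdorffDim_le_of_lipschitzWith [MetricSpace X] [ProperSpace X] [MeasurableSpace X]
    [BorelSpace X] {K : ℝ≥0} (hf : ∀ i, LipschitzWith K (f i)) (hK0 : 0 < K) (hK1 : K < 1)
    {p : Fin m → ℝ≥0∞} (hp : ∑ i, p i = 1) {μ : Measure X} [IsProbabilityMeasure μ]
    (hμ : μ = ∑ i, p i • μ.map (f i)) :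
    upperHausdorffDim μ ≤ ENNReal.ofReal (Real.log m / Real.log (1 / K)) := by
  obtain ⟨x₀⟩ := nonempty_of_isProbabilityMeasure μ
  have hK : 0 < 1 - (K : ℝ) := sub_pos.2 hK1
  set r₀ := (∑ i, dist (f i x₀) x₀) / (1 - K)
  have hr₀ : 0 ≤ r₀ := div_nonneg (Finset.sum_nonneg fun _ _ => dist_nonneg) hK.le
  have hB (n : ℕ) : hutchinson f (closedBall x₀ (r₀ + n)) ⊆ closedBall x₀ (r₀ + n) := by
    refine iUnion_subset fun i => (mapsTo_closedBall_of_lipschitzWith (hf i) ?_).image_subset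
    calc dist (f i x₀) x₀ ≤ ∑ j, dist (f j x₀) x₀ :=
          Finset.single_le_sum (f := fun j => dist (f j x₀) x₀) (fun j _ => dist_nonneg)
            (Finset.mem_univ i)
      _ = (1 - K) * r₀ := (mul_div_cancel₀ _ hK.ne').symm
      _ ≤ (1 - K) * (r₀ + n) := by gcongr; exact le_add_of_nonneg_right n.cast_nonneg
  have hcont i := (hf i).continuous
  refine upperHausdorffDim_le_of_forall_closedBall_s5 μ x₀
    (A := fun n => ⋂ k, (hutchinson f)^[k] (closedBall x₀ (r₀ + n)))
    (fun n => .iInter fun k =>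
      (isCompact_iterate_hutchinson hcont (isCompact_closedBall _ _) k).isClosed.measurableSet)
    (fun n => dimH_iInter_iterate_hutchinson_le hf hK0 hK1 isBounded_closedBall.ediam_ne_top)
    fun n => ?_
  exact (measure_mono (closedBall_subset_closedBall (le_add_of_nonneg_left hr₀))).trans
    (measure_le_measure_iInter_iterate_hutchinson hcont hp hμ (isCompact_closedBall _ _) (hB n))

end IFS

section RobustRegression

variable {E : Type*} [NormedAddCommGroup E] [InnerProductSpace ℝ E]

theorem hasDerivAt_one_sub_exp_neg_sq_div (t₀ t : ℝ) :
    HasDerivAt (fun t => 1 - exp (-t ^ 2 / t₀)) (2 / t₀ * mulExpNegMulSq t₀⁻¹ t) t := by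
  refine ((((hasDerivAt_id t).pow 2).neg.div_const t₀).exp.const_sub 1).congr_deriv ?_
  simp only [mulExpNegMulSq, Pi.pow_apply, Pi.neg_apply, id]
  ring_nf

theorem hasGradientAt_expSquaredLoss_add_sq_norm [CompleteSpace E] (a : E) (c lam t₀ : ℝ) (w : E) :
    HasGradientAt (fun w => (1 - exp (-(c - ⟪w, a⟫) ^ 2 / t₀)) + lam * ‖w‖ ^ 2 / 2)
      (lam • w - (2 / t₀ * mulExpNegMulSq t₀⁻¹ (c - ⟪w, a⟫)) • a) w := by
  rw [hasGradientAt_iff_hasFDerivAt]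
  have hres : HasFDerivAt (fun w => c - ⟪w, a⟫) (-innerSL ℝ a) w := by
    simp_rw [real_inner_comm a]
    exact ((innerSL ℝ a).hasFDerivAt).const_sub c
  have hloss := (hasDerivAt_one_sub_exp_neg_sq_div t₀ (c - ⟪w, a⟫)).comp_hasFDerivAt w hres
  have hreg := ((hasStrictFDerivAt_norm_sq w).hasFDerivAt.const_mul lam).mul_const 2⁻¹
  refine (hloss.fun_add hreg).congr_fderiv ?_
  ext v
  simp only [smul_neg, add_apply, neg_apply, smul_apply, coe_innerSL_apply, smul_eq_mul,
    nsmul_eq_mul, Nat.cast_ofNat, map_sub, map_smul, sub_apply,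
    InnerProductSpace.toDual_apply_apply]
  ring

theorem norm_smul_sub_smul_le_of_lipschitzWith {g : ℝ → ℝ} {K : ℝ≥0} (hg : LipschitzWith K g)
    (a w w' : E) : ‖g ⟪w, a⟫ • a - g ⟪w', a⟫ • a‖ ≤ K * ‖a‖ ^ 2 * ‖w - w'‖ :=
  calc ‖g ⟪w, a⟫ • a - g ⟪w', a⟫ • a‖ = |g ⟪w, a⟫ - g ⟪w', a⟫| * ‖a‖ := by
        rw [← sub_smul, norm_smul, Real.norm_eq_abs]
    _ ≤ K * |⟪w, a⟫ - ⟪w', a⟫| * ‖a‖ := by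
        gcongr
        simpa only [Real.dist_eq] using hg.dist_le_mul _ _
    _ ≤ K * (‖w - w'‖ * ‖a‖) * ‖a‖ := by
        gcongr
        rw [← inner_sub_left]
        exact abs_real_inner_le_norm _ _
    _ = K * ‖a‖ ^ 2 * ‖w - w'‖ := by ring

theorem lipschitzWith_smul_add_smul_sum {ι : Type*} (s : Finset ι) (c κ : ℝ) {g : ι → ℝ → ℝ}
    {K : ℝ≥0} (hg : ∀ j ∈ s, LipschitzWith K (g j)) {a : ι → E} {R : ℝ}
    (ha : ∀ j ∈ s, ‖a j‖ ≤ R) :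
    LipschitzWith (Real.toNNReal (|c| + |κ| * (s.card * (K * R ^ 2))))
      fun w => c • w + κ • ∑ j ∈ s, g j ⟪w, a j⟫ • a j := by
  refine LipschitzWith.of_dist_le' fun w w' => ?_
  have hterm : ∀ j ∈ s, ‖g j ⟪w, a j⟫ • a j - g j ⟪w', a j⟫ • a j‖ ≤ K * R ^ 2 * ‖w - w'‖ :=
    fun j hj => (norm_smul_sub_smul_le_of_lipschitzWith (hg j hj) _ _ _).trans <| by
      gcongr
      exact ha j hj
  rw [dist_eq_norm, dist_eq_norm]
  calc ‖c • w + κ • ∑ j ∈ s, g j ⟪w, a j⟫ • a j - (c • w' + κ • ∑ j ∈ s, g j ⟪w', a j⟫ • a j)‖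
      = ‖c • (w - w') + κ • ∑ j ∈ s, (g j ⟪w, a j⟫ • a j - g j ⟪w', a j⟫ • a j)‖ := by
        rw [Finset.sum_sub_distrib, smul_sub, smul_sub]
        abel_nf
    _ ≤ |c| * ‖w - w'‖ + |κ| * (s.card • (K * R ^ 2 * ‖w - w'‖)) := by
        refine norm_add_le_of_le (by rw [norm_smul, Real.norm_eq_abs]) ?_
        rw [norm_smul, Real.norm_eq_abs]
        gcongr
        exact (norm_sum_le _ _).trans (Finset.sum_le_card_nsmul _ _ _ hterm)
    _ = (|c| + |κ| * (s.card * (K * R ^ 2))) * ‖w - w'‖ := by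
        rw [nsmul_eq_mul]
        ring

theorem lipschitzWith_sgdStep_expSquaredLoss [CompleteSpace E] {ι : Type*} {S : Finset ι}
    (hS : S.Nonempty) (a : ι → E) (y : ι → ℝ) {lam t₀ η R : ℝ} (ht₀ : 0 < t₀) (hη : 0 ≤ η)
    (hηlam : η * lam ≤ 1) (hR : ∀ j ∈ S, ‖a j‖ ≤ R) :
    LipschitzWith (Real.toNNReal (1 - η * lam + 2 * η * R ^ 2 / t₀)) fun w =>
      w - (η / S.card) • ∑ j ∈ S,
        gradient (fun w' => (1 - exp (-(y j - ⟪w', a j⟫) ^ 2 / t₀)) + lam * ‖w'‖ ^ 2 / 2) w := by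
  have hcard : (S.card : ℝ) ≠ 0 := Nat.cast_ne_zero.2 hS.card_ne_zero
  have hstep : (fun w => w - (η / S.card) • ∑ j ∈ S,
      gradient (fun w' => (1 - exp (-(y j - ⟪w', a j⟫) ^ 2 / t₀)) + lam * ‖w'‖ ^ 2 / 2) w) =
      fun w => (1 - η * lam) • w + (η / S.card * (2 / t₀)) •
        ∑ j ∈ S, mulExpNegMulSq t₀⁻¹ (y j - ⟪w, a j⟫) • a j := by
    funext w
    simp only [fun j => (hasGradientAt_expSquaredLoss_add_sq_norm (a j) (y j) lam t₀ w).gradient,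
      Finset.sum_sub_distrib, Finset.sum_const, mul_smul, ← Finset.smul_sum,
      ← Nat.cast_smul_eq_nsmul ℝ]
    match_scalars <;> field_simp
  have hg : ∀ j ∈ S, LipschitzWith 1 fun t => mulExpNegMulSq t₀⁻¹ (y j - t) := fun j _ => by
    have hres : LipschitzWith 1 fun t : ℝ => y j - t :=
      LipschitzWith.of_dist_le_mul fun t t' => by rw [dist_sub_left, NNReal.coe_one, one_mul]
    simpa only [mul_one, Function.comp_def] using
      (lipschitzWith_one_mulExpNegMulSq (inv_pos.2 ht₀)).comp hres
  rw [hstep]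
  convert lipschitzWith_smul_add_smul_sum S (1 - η * lam) (η / S.card * (2 / t₀)) hg hR using 2
  rw [abs_of_nonneg (by linarith), abs_of_nonneg (by positivity), NNReal.coe_one]
  field_simp

theorem stepSize_contraction_bounds {lam t₀ R η : ℝ} (ht₀ : 0 < t₀) (hR0 : 0 ≤ R)
    (hR : R < √(lam * t₀ / 2)) (hη : 0 < η) (hη' : η < 1 / (lam + 2 * R ^ 2 / t₀)) :
    η * lam < 1 ∧ 0 < 1 - η * lam + 2 * η * R ^ 2 / t₀ ∧ 1 - η * lam + 2 * η * R ^ 2 / t₀ < 1 := by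
  have hR2 : 2 * R ^ 2 / t₀ < lam := by
    have := (Real.lt_sqrt hR0).1 hR
    rw [div_lt_iff₀ ht₀]
    linarith
  have hstep : η * lam + η * (2 * R ^ 2 / t₀) < 1 := by
    rw [← mul_add]
    exact (lt_div_iff₀ (one_div_pos.1 (hη.trans hη'))).1 hη'
  have hreg : η * (2 * R ^ 2 / t₀) < η * lam := mul_lt_mul_of_pos_left hR2 hη
  have hreg0 : 0 ≤ η * (2 * R ^ 2 / t₀) := by positivity
  have hL : 1 - η * lam + 2 * η * R ^ 2 / t₀ = 1 - η * lam + η * (2 * R ^ 2 / t₀) := by ring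
  refine ⟨by linarith, ?_, ?_⟩ <;> rw [hL] <;> linarith

end RobustRegression

theorem sgd_robust_regression_hausdorff_dim_bound_general
    (d n b m : ℕ) (hb : 0 < b) (hnm : n = m * b)
    (a : Fin n → EuclideanSpace ℝ (Fin d)) (y : Fin n → ℝ)
    (lamr t₀ R η : ℝ) (ht₀ : 0 < t₀)
    (hR : ∀ i, ‖a i‖ ≤ R) (hR0 : 0 ≤ R) (hRbound : R < Real.sqrt (lamr * t₀ / 2))
    (hη : 0 < η) (hη' : η < 1 / (lamr + 2 * R ^ 2 / t₀))
    (ℓ : EuclideanSpace ℝ (Fin d) → EuclideanSpace ℝ (Fin d) × ℝ → ℝ)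
    (hℓ : ∀ w z, ℓ w z = (1 - Real.exp (-(z.2 - ⟪w, z.1⟫) ^ 2 / t₀)) + lamr * ‖w‖ ^ 2 / 2)
    (S : Fin m → Finset (Fin n))
    (hcard : ∀ i, (S i).card = b)
    (p : Fin m → ℝ≥0∞) (hpsum : ∑ i, p i = 1)
    (h : Fin m → EuclideanSpace ℝ (Fin d) → EuclideanSpace ℝ (Fin d))
    (hdef : ∀ i w, h i w = w - (η / b) • ∑ j ∈ S i, gradient (fun w' => ℓ w' (a j, y j)) w)
    (μ : Measure (EuclideanSpace ℝ (Fin d))) [IsProbabilityMeasure μ]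
    (hinv : μ = ∑ i, p i • μ.map (h i)) :
    upperHausdorffDim μ ≤
      ENNReal.ofReal (Real.log ((n : ℝ) / (b : ℝ)) /
        Real.log (1 / (1 - η * lamr + 2 * η * R ^ 2 / t₀))) := by
  obtain ⟨hηlam, hL0, hL1⟩ := stepSize_contraction_bounds ht₀ hR0 hRbound hη hη'
  have hLip i : LipschitzWith (1 - η * lamr + 2 * η * R ^ 2 / t₀).toNNReal (h i) := by
    have hS : (S i).Nonempty := Finset.card_pos.1 (hcard i ▸ hb)
    have hstep_eq : h i = fun w => w - (η / (S i).card) • ∑ j ∈ S i, gradient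
        (fun w' => (1 - exp (-(y j - ⟪w', a j⟫) ^ 2 / t₀)) + lamr * ‖w'‖ ^ 2 / 2) w := by
      funext w
      simp only [hdef, hℓ, hcard]
    rw [hstep_eq]
    exact lipschitzWith_sgdStep_expSquaredLoss hS a y ht₀ hη.le hηlam.le fun j _ => hR j
  have hnb : (n : ℝ) / b = m := by
    rw [hnm, Nat.cast_mul, mul_div_cancel_right₀ _ (Nat.cast_ne_zero.2 hb.ne')]
  rw [hnb]
  simpa [Real.coe_toNNReal _ hL0.le] using IFS.upperHausdorffDim_le_of_lipschitzWith hLip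
    (Real.toNNReal_pos.2 hL0) (Real.toNNReal_lt_one.2 hL1) hpsum hinv

/-- Non-convex robust regression, SGD: for the loss
`ℓ(w,(a,y)) = ρ_exp(y − ⟨w,a⟩) + λ_r‖w‖²/2` with `ρ_exp(t) = 1 − e^{−t²/t₀}`,
`R = max_i ‖a_i‖ < √(λ_r t₀/2)` and step-size `0 < η < 1/(λ_r + 2R²/t₀)`,
any invariant measure `μ` of the SGD iterated function system with batch size `b`
satisfies `dim̄_H μ ≤ log(n/b) / log(1/(1 − ηλ_r + 2ηR²/t₀))`. -/
theorem sgd_robust_regression_hausdorff_dim_bound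
    (d n b m : ℕ) (hb : 0 < b) (hnm : n = m * b)
    (a : Fin n → EuclideanSpace ℝ (Fin d)) (y : Fin n → ℝ)
    (lamr t₀ R η : ℝ) (hlamr : 0 < lamr) (ht₀ : 0 < t₀)
    (hR : ∀ i, ‖a i‖ ≤ R) (hR0 : 0 ≤ R) (hRbound : R < Real.sqrt (lamr * t₀ / 2))
    (hη : 0 < η) (hη' : η < 1 / (lamr + 2 * R ^ 2 / t₀))
    (ℓ : EuclideanSpace ℝ (Fin d) → EuclideanSpace ℝ (Fin d) × ℝ → ℝ)
    (hℓ : ∀ w z, ℓ w z = (1 - Real.exp (-(z.2 - ⟪w, z.1⟫) ^ 2 / t₀)) + lamr * ‖w‖ ^ 2 / 2)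
    (S : Fin m → Finset (Fin n))
    (hcard : ∀ i, (S i).card = b)
    (hdisj : ∀ i j, i ≠ j → Disjoint (S i) (S j))
    (hcover : ∀ j : Fin n, ∃ i, j ∈ S i)
    (p : Fin m → ℝ≥0∞) (hp : ∀ i, 0 < p i) (hpsum : ∑ i, p i = 1)
    (h : Fin m → EuclideanSpace ℝ (Fin d) → EuclideanSpace ℝ (Fin d))
    (hdef : ∀ i w, h i w = w - (η / b) • ∑ j ∈ S i, gradient (fun w' => ℓ w' (a j, y j)) w)
    (μ : Measure (EuclideanSpace ℝ (Fin d))) [IsProbabilityMeasure μ]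
    (hinv : μ = ∑ i, p i • μ.map (h i)) :
    upperHausdorffDim μ ≤
      ENNReal.ofReal (Real.log ((n : ℝ) / (b : ℝ)) /
        Real.log (1 / (1 - η * lamr + 2 * η * R ^ 2 / t₀))) :=
  sgd_robust_regression_hausdorff_dim_bound_general d n b m hb hnm a y lamr t₀ R η ht₀ hR hR0
    hRbound hη hη' ℓ hℓ S hcard p hpsum h hdef μ hinv
end

section
/- Consider support vector machines with smooth hinge loss: ℓ(w,(a,y)) = ℓ_σ(y aᵀw) + λ‖w‖²/2 on ℝ^d, where ℓ_σ(z) = 1 − z + σ log(1 + e^{−(1−z)/σ}) with smoothing parameter σ > 0, λ > 0, data points z_i = (a_i, y_i) with y_i ∈ {−1,+1}, and R := max_i ‖a_i‖ < ∞. Assume the step-size satisfies 0 < η < 1/(λ + R²/(4σ)). Let μ be any Borel probability measure on ℝ^d invariant under the SGD iterated function system with batch size b (so m_b = n/b batches). Then dim̄_H μ ≤ log(n/b) / log(1/(1 − ηλ)). -/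
open MeasureTheory Filter
open scoped ENNReal RealInnerProductSpace

/-!
Each SGD map has the form `w ↦ (1 - ηλ) w - (η/b) ∑ⱼ g ⟪vⱼ, w⟫ vⱼ` with `vⱼ = yⱼ aⱼ` and
`g = ℓ_σ' = -sigmoid ((1 - ·) / σ)`, which is monotone and `1/(4σ)`-Lipschitz. Hence
`(g s - g t)² ≤ (g s - g t) (s - t) / (4σ)`, so the difference `q` of the subtracted sums at `u`
and `w` satisfies `‖q‖² ≤ (η R² / (4σ)) ⟪u - w, q⟫`; expanding `‖(1 - ηλ) (u - w) - q‖²` shows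
that the map is a `(1 - ηλ)`-contraction.

For an iterated function system of `m` maps that are `c`-Lipschitz with `c < 1`, an invariant
probability measure gives full mass to some ball `B`, because, for a suitable `r`, each map sends
the ball of radius `r + t` about a base point into the one of radius `r + c t`. By invariance it
then gives full mass to the union of the `m ^ k` images of `B` under compositions of `k` maps,
sets of diameter at most `c ^ k diam B`. The intersection over `k` is a closed set of full measure whose `s`-dimensional
Hausdorff measure vanishes as soon as `m c ^ s < 1`, i.e. for every `s > log m / log (1/c)`.
-/

open Set Metric Finset
open scoped NNReal Topology

noncomputable def smoothHinge (σ t : ℝ) : ℝ :=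
  1 - t + σ * Real.log (1 + Real.exp (-(1 - t) / σ))

noncomputable def smoothHingeDeriv (σ t : ℝ) : ℝ :=
  -Real.sigmoid ((1 - t) / σ)

theorem hasDerivAt_smoothHinge {σ : ℝ} (hσ : σ ≠ 0) (t : ℝ) :
    HasDerivAt (smoothHinge σ) (smoothHingeDeriv σ t) t := by
  have hlin : HasDerivAt (fun t : ℝ => -(1 - t) / σ) (1 / σ) t := by
    simpa using (((hasDerivAt_id t).const_sub 1).neg).div_const σ
  have hlog := ((hlin.exp.const_add 1).log (by positivity)).const_mul σ
  refine (((hasDerivAt_id t).const_sub 1).add hlog).congr_deriv ?_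
  rw [smoothHingeDeriv, Real.sigmoid_def, ← neg_div]
  field_simp
  ring

theorem Real.lipschitzWith_sigmoid : LipschitzWith 4⁻¹ Real.sigmoid := by
  refine lipschitzWith_of_nnnorm_deriv_le differentiable_sigmoid fun x => ?_
  have h0 := Real.sigmoid_pos x
  have h1 := Real.sigmoid_lt_one x
  rw [← NNReal.coe_le_coe, coe_nnnorm, Real.deriv_sigmoid, Real.norm_eq_abs,
    abs_of_pos (by nlinarith), NNReal.coe_inv]
  norm_num
  nlinarith [sq_nonneg (Real.sigmoid x - 2⁻¹)]

theorem monotone_smoothHingeDeriv {σ : ℝ} (hσ : 0 < σ) : Monotone (smoothHingeDeriv σ) :=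
  fun s t hst => neg_le_neg <| Real.sigmoid_monotone <| by gcongr

theorem lipschitzWith_smoothHingeDeriv {σ : ℝ} (hσ : 0 < σ) :
    LipschitzWith (1 / (4 * σ)).toNNReal (smoothHingeDeriv σ) := by
  refine LipschitzWith.of_dist_le_mul fun s t => ?_
  rw [Real.coe_toNNReal _ (by positivity), Real.dist_eq, Real.dist_eq, smoothHingeDeriv,
    smoothHingeDeriv, neg_sub_neg, abs_sub_comm]
  calc |Real.sigmoid ((1 - s) / σ) - Real.sigmoid ((1 - t) / σ)|
      ≤ 4⁻¹ * |(1 - s) / σ - (1 - t) / σ| := by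
        simpa [Real.dist_eq] using Real.lipschitzWith_sigmoid.dist_le_mul ((1 - s) / σ) ((1 - t) / σ)
    _ = 1 / (4 * σ) * |s - t| := by
        rw [← sub_div, abs_div, abs_of_pos hσ, abs_sub_comm]
        field_simp
        ring_nf

section Contraction

variable {E : Type*} [NormedAddCommGroup E] [InnerProductSpace ℝ E]

theorem hasGradientAt_smoothHinge_inner_add_sq [CompleteSpace E] {σ : ℝ} (hσ : σ ≠ 0)
    (lam : ℝ) (v w : E) :
    HasGradientAt (fun w' => smoothHinge σ ⟪v, w'⟫ + lam * ‖w'‖ ^ 2 / 2)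
      (smoothHingeDeriv σ ⟪v, w⟫ • v + lam • w) w := by
  have hhinge := (hasDerivAt_smoothHinge hσ ⟪v, w⟫).comp_hasFDerivAt w (innerSL ℝ v).hasFDerivAt
  have hsq := (hasStrictFDerivAt_norm_sq w).hasFDerivAt.const_mul (lam / 2)
  have hsq_eq : (fun w' : E => lam * ‖w'‖ ^ 2 / 2) = fun w' => lam / 2 * ‖w'‖ ^ 2 := by
    funext w'
    ring
  rw [← hsq_eq] at hsq
  rw [hasGradientAt_iff_hasFDerivAt]
  refine (hhinge.add hsq).congr_fderiv ?_
  ext z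
  simp only [add_apply, smul_apply, coe_innerSL_apply,
    smul_eq_mul, nsmul_eq_mul, map_add, map_smul, InnerProductSpace.toDual_apply_apply]
  ring

theorem Monotone.sub_mul_sub_nonneg {g : ℝ → ℝ} (hg : Monotone g) (s t : ℝ) :
    0 ≤ (g s - g t) * (s - t) := by
  rcases le_total s t with hst | hst
  · exact mul_nonneg_of_nonpos_of_nonpos (sub_nonpos.2 (hg hst)) (sub_nonpos.2 hst)
  · exact mul_nonneg (sub_nonneg.2 (hg hst)) (sub_nonneg.2 hst)

theorem LipschitzWith.sq_sub_le_mul_of_monotone {g : ℝ → ℝ} {L : ℝ≥0} (hgL : LipschitzWith L g)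
    (hg : Monotone g) (s t : ℝ) : (g s - g t) ^ 2 ≤ L * ((g s - g t) * (s - t)) := by
  have hlip : |g s - g t| ≤ L * |s - t| := by
    simpa [Real.dist_eq] using hgL.dist_le_mul s t
  rw [← abs_of_nonneg (hg.sub_mul_sub_nonneg s t), abs_mul, ← sq_abs]
  nlinarith [abs_nonneg (g s - g t)]

theorem norm_smul_sub_le_of_sq_le_mul_inner {c T : ℝ} {x q : E} (hc : 0 ≤ c) (hT : T ≤ 2 * c)
    (hq : ‖q‖ ^ 2 ≤ T * ⟪x, q⟫) (hxq : 0 ≤ ⟪x, q⟫) : ‖c • x - q‖ ≤ c * ‖x‖ := by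
  have hsq : ‖c • x - q‖ ^ 2 ≤ (c * ‖x‖) ^ 2 := by
    rw [norm_sub_sq_real, norm_smul, real_inner_smul_left, Real.norm_eq_abs, abs_of_nonneg hc]
    nlinarith
  exact (pow_le_pow_iff_left₀ (norm_nonneg _) (by positivity) two_ne_zero).1 hsq

theorem lipschitzWith_smul_sub_sum_smul {ι : Type*} (S : Finset ι) (v : ι → E) {R : ℝ}
    (hv : ∀ j ∈ S, ‖v j‖ ≤ R) {g : ℝ → ℝ} {L : ℝ≥0} (hg : Monotone g) (hgL : LipschitzWith L g)
    {c κ : ℝ} (hc : 0 ≤ c) (hκ : 0 ≤ κ) (hcond : κ * #S * R ^ 2 * L ≤ 2 * c) :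
    LipschitzWith c.toNNReal (fun w => c • w - κ • ∑ j ∈ S, g ⟪v j, w⟫ • v j) := by
  refine LipschitzWith.of_dist_le_mul fun u w => ?_
  rw [dist_eq_norm, dist_eq_norm, Real.coe_toNNReal _ hc]
  set δ : ι → ℝ := fun j => g ⟪v j, u⟫ - g ⟪v j, w⟫
  set q : E := κ • ∑ j ∈ S, δ j • v j
  have hdiff : c • u - κ • ∑ j ∈ S, g ⟪v j, u⟫ • v j - (c • w - κ • ∑ j ∈ S, g ⟪v j, w⟫ • v j)
      = c • (u - w) - q := by
    simp only [q, δ, sub_smul, Finset.sum_sub_distrib, smul_sub]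
    abel
  have hinner : ⟪u - w, q⟫ = κ * ∑ j ∈ S, δ j * (⟪v j, u⟫ - ⟪v j, w⟫) := by
    simp only [q, real_inner_smul_right, inner_sum, real_inner_comm, inner_sub_right]
  have hcoco : ∀ j ∈ S, δ j ^ 2 ≤ L * (δ j * (⟪v j, u⟫ - ⟪v j, w⟫)) :=
    fun j _ => hgL.sq_sub_le_mul_of_monotone hg _ _
  have hnorm : ‖q‖ ≤ κ * R * ∑ j ∈ S, |δ j| := by
    rw [norm_smul, Real.norm_eq_abs, abs_of_nonneg hκ, mul_assoc, Finset.mul_sum]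
    gcongr
    refine (norm_sum_le _ _).trans (Finset.sum_le_sum fun j hj => ?_)
    rw [norm_smul, Real.norm_eq_abs, mul_comm]
    exact mul_le_mul_of_nonneg_right (hv j hj) (abs_nonneg _)
  have hq : ‖q‖ ^ 2 ≤ κ * #S * R ^ 2 * L * ⟪u - w, q⟫ :=
    calc ‖q‖ ^ 2 ≤ (κ * R * ∑ j ∈ S, |δ j|) ^ 2 := pow_le_pow_left₀ (norm_nonneg _) hnorm 2
      _ = κ ^ 2 * R ^ 2 * (∑ j ∈ S, |δ j|) ^ 2 := by ring
      _ ≤ κ ^ 2 * R ^ 2 * (#S * ∑ j ∈ S, δ j ^ 2) := by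
        gcongr
        simpa only [sq_abs] using sq_sum_le_card_mul_sum_sq (s := S) (f := fun j => |δ j|)
      _ ≤ κ ^ 2 * R ^ 2 * (#S * ∑ j ∈ S, L * (δ j * (⟪v j, u⟫ - ⟪v j, w⟫))) := by
        gcongr with j hj
        exact hcoco j hj
      _ = κ * #S * R ^ 2 * L * ⟪u - w, q⟫ := by
        rw [hinner, ← Finset.mul_sum]
        ring
  have hxq : 0 ≤ ⟪u - w, q⟫ :=
    hinner ▸ mul_nonneg hκ (Finset.sum_nonneg fun j _ => hg.sub_mul_sub_nonneg _ _)
  rw [hdiff]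
  exact norm_smul_sub_le_of_sq_le_mul_inner hc hcond hq hxq

theorem lipschitzWith_sgdStep_smoothHinge [CompleteSpace E] {ι : Type*} {S : Finset ι}
    (hS : S.Nonempty) (v : ι → E) {R σ lam η : ℝ} (hv : ∀ j ∈ S, ‖v j‖ ≤ R) (hσ : 0 < σ)
    (hη : 0 ≤ η) (hstep : η * (lam + R ^ 2 / (4 * σ)) ≤ 1) :
    LipschitzWith (1 - η * lam).toNNReal (fun w => w - (η / #S) • ∑ j ∈ S,
      gradient (fun w' => smoothHinge σ ⟪v j, w'⟫ + lam * ‖w'‖ ^ 2 / 2) w) := by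
  have hS' : (#S : ℝ) ≠ 0 := by exact_mod_cast hS.card_ne_zero
  have hR : 0 ≤ η * (R ^ 2 / (4 * σ)) := by positivity
  have hstep' : η * lam + η * (R ^ 2 / (4 * σ)) ≤ 1 := by rwa [← mul_add]
  have hstep_eq : (fun w => w - (η / #S) • ∑ j ∈ S,
      gradient (fun w' => smoothHinge σ ⟪v j, w'⟫ + lam * ‖w'‖ ^ 2 / 2) w)
      = fun w => (1 - η * lam) • w - (η / #S) • ∑ j ∈ S, smoothHingeDeriv σ ⟪v j, w⟫ • v j := by
    funext w
    rw [Finset.sum_congr rfl fun j _ =>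
        (hasGradientAt_smoothHinge_inner_add_sq hσ.ne' lam (v j) w).gradient,
      Finset.sum_add_distrib, Finset.sum_const, smul_add, ← Nat.cast_smul_eq_nsmul ℝ, smul_smul,
      smul_smul, div_mul_cancel₀ _ hS', sub_smul, one_smul]
    abel
  rw [hstep_eq]
  refine lipschitzWith_smul_sub_sum_smul S v hv (monotone_smoothHingeDeriv hσ)
    (lipschitzWith_smoothHingeDeriv hσ) (by linarith) (by positivity) ?_
  rw [Real.coe_toNNReal _ (by positivity), div_mul_cancel₀ _ hS']
  linarith [show η * R ^ 2 * (1 / (4 * σ)) = η * (R ^ 2 / (4 * σ)) by ring]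

end Contraction

theorem upperHausdorffDim_le_dimH {X : Type*} [EMetricSpace X] [MeasurableSpace X]
    {μ : Measure X} {A : Set X} (hA : MeasurableSet A) (hμA : μ A = 1) :
    upperHausdorffDim μ ≤ dimH A :=
  iInf_le_of_le A <| iInf_le_of_le hA <| iInf_le _ hμA

section InvariantMeasure

variable {E ι : Type*} [Fintype ι] {h : ι → E → E} {p : ι → ℝ≥0∞}

theorem measure_le_of_forall_mapsTo [MeasurableSpace E] {μ : Measure E}
    (hh : ∀ i, AEMeasurable (h i) μ) (hp : ∑ i, p i = 1) (hinv : μ = ∑ i, p i • μ.map (h i))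
    {s t : Set E} (hst : ∀ i, MapsTo (h i) s t) : μ s ≤ μ t := by
  calc μ s = ∑ i, p i * μ s := by rw [← Finset.sum_mul, hp, one_mul]
    _ ≤ ∑ i, p i * μ.map (h i) t := Finset.sum_le_sum fun i _ => mul_le_mul_right
      ((measure_mono (hst i).subset_preimage).trans (Measure.le_map_apply (hh i) t)) _
    _ = μ t := by
      conv_rhs => rw [hinv]
      simp only [Measure.coe_finsetSum, Measure.coe_smul, Finset.sum_apply, Pi.smul_apply,
        smul_eq_mul]

variable [MetricSpace E] [MeasurableSpace E] [BorelSpace E] {c : ℝ≥0} {μ : Measure E}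
  [IsProbabilityMeasure μ]

theorem exists_measure_closedBall_eq_one_of_invariant (hc1 : c < 1)
    (hlip : ∀ i, LipschitzWith c (h i)) (hp : ∑ i, p i = 1)
    (hinv : μ = ∑ i, p i • μ.map (h i)) : ∃ x₀ ρ, μ (closedBall x₀ ρ) = 1 := by
  obtain ⟨x₀⟩ := nonempty_of_isProbabilityMeasure μ
  set K := ∑ i, dist (h i x₀) x₀
  set r := K / (1 - c)
  have hr : c * r + K = r := by
    have : (1 : ℝ) - c ≠ 0 := by rw [sub_ne_zero]; exact_mod_cast hc1.ne'
    simp only [r]; field_simp; ring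
  have hmaps : ∀ i ρ, MapsTo (h i) (closedBall x₀ ρ) (closedBall x₀ (r + c * (ρ - r))) := by
    intro i ρ x hx
    rw [mem_closedBall] at hx ⊢
    calc dist (h i x) x₀ ≤ dist (h i x) (h i x₀) + dist (h i x₀) x₀ := dist_triangle _ _ _
      _ ≤ c * dist x x₀ + K := add_le_add ((hlip i).dist_le_mul x x₀)
          (Finset.single_le_sum (f := fun j => dist (h j x₀) x₀) (fun j _ => dist_nonneg) (Finset.mem_univ i))
      _ ≤ r + c * (ρ - r) := by nlinarith [c.coe_nonneg]
  have hiter : ∀ (k : ℕ) ρ, μ (closedBall x₀ ρ) ≤ μ (closedBall x₀ (r + c ^ k * (ρ - r))) := by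
    intro k
    induction k with
    | zero => simp
    | succ k ih =>
      intro ρ
      refine (measure_le_of_forall_mapsTo (fun i => (hlip i).continuous.aemeasurable) hp hinv
        fun i => hmaps i ρ).trans ?_
      have hρ : r + c ^ k * (r + c * (ρ - r) - r) = r + c ^ (k + 1) * (ρ - r) := by ring
      exact hρ ▸ ih (r + c * (ρ - r))
  refine ⟨x₀, r + 1, le_antisymm prob_le_one ?_⟩
  calc (1 : ℝ≥0∞) = μ (⋃ n : ℕ, closedBall x₀ n) := by rw [iUnion_closedBall_nat, measure_univ]
    _ = ⨆ n : ℕ, μ (closedBall x₀ n) :=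
      Monotone.measure_iUnion fun m n hmn => closedBall_subset_closedBall (by exact_mod_cast hmn)
    _ ≤ μ (closedBall x₀ (r + 1)) := iSup_le fun n => by
      have hlim : Tendsto (fun k : ℕ => (c : ℝ) ^ k * (n - r)) atTop (𝓝 0) := by
        simpa using (tendsto_pow_atTop_nhds_zero_of_lt_one c.coe_nonneg hc1).mul_const (n - r)
      obtain ⟨k, hk⟩ := (hlim.eventually (gt_mem_nhds one_pos)).exists
      exact (hiter k n).trans (measure_mono (closedBall_subset_closedBall (by linarith)))

theorem exists_closed_cover_of_invariant (hlip : ∀ i, LipschitzWith c (h i))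
    (hp : ∑ i, p i = 1) (hinv : μ = ∑ i, p i • μ.map (h i)) {B : Set E} (hB : IsClosed B)
    (hμB : μ B = 1) (k : ℕ) :
    ∃ U : (Fin k → ι) → Set E, (∀ w, IsClosed (U w)) ∧
      (∀ w, ediam (U w) ≤ c ^ k * ediam B) ∧ μ (⋃ w, U w) = 1 := by
  induction k with
  | zero => exact ⟨fun _ => B, fun _ => hB, by simp, by rwa [iUnion_const]⟩
  | succ k ih =>
    obtain ⟨U, hUc, hUd, hUμ⟩ := ih
    refine ⟨fun w => closure (h (w 0) '' U (Fin.tail w)), fun _ => isClosed_closure,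
      fun w => ?_, le_antisymm prob_le_one ?_⟩
    · rw [ediam_closure, pow_succ', mul_assoc]
      exact ((hlip _).ediam_image_le _).trans (mul_le_mul_right (hUd _) _)
    · refine hUμ ▸ measure_le_of_forall_mapsTo (fun i => (hlip i).continuous.aemeasurable) hp
        hinv fun i x hx => ?_
      obtain ⟨w, hw⟩ := mem_iUnion.1 hx
      exact mem_iUnion.2 ⟨Fin.cons i w, subset_closure (by simpa using mem_image_of_mem (h i) hw)⟩

end InvariantMeasure

section Cover

variable {E ι : Type*} [Fintype ι] [MetricSpace E] [MeasurableSpace E] [BorelSpace E]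
  {c : ℝ≥0} {D : ℝ≥0∞} {s : Set E}

theorem hausdorffMeasure_eq_zero_of_forall_cover (hc1 : c < 1) (hD : D ≠ ∞)
    (U : (k : ℕ) → (Fin k → ι) → Set E) (hU : ∀ k w, ediam (U k w) ≤ c ^ k * D)
    (hs : ∀ k, s ⊆ ⋃ w, U k w) {d : ℝ} (hd : 0 ≤ d)
    (hcd : (Fintype.card ι : ℝ≥0∞) * (c : ℝ≥0∞) ^ d < 1) : μH[d] s = 0 := by
  have hdiam : Tendsto (fun k : ℕ => (c : ℝ≥0∞) ^ k * D) atTop (𝓝 0) := by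
    simpa using ENNReal.Tendsto.mul_const (ENNReal.tendsto_pow_atTop_nhds_zero_of_lt_one
      (ENNReal.coe_lt_one_iff.2 hc1)) (Or.inr hD)
  have hsum : ∀ k : ℕ, ∑ w, ediam (U k w) ^ d ≤
      ((Fintype.card ι : ℝ≥0∞) * (c : ℝ≥0∞) ^ d) ^ k * D ^ d := by
    intro k
    calc ∑ w, ediam (U k w) ^ d ≤ ∑ _w : Fin k → ι, ((c : ℝ≥0∞) ^ k * D) ^ d :=
          Finset.sum_le_sum fun w _ => ENNReal.rpow_le_rpow (hU k w) hd
      _ = ((Fintype.card ι : ℝ≥0∞) * (c : ℝ≥0∞) ^ d) ^ k * D ^ d := by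
        rw [Finset.sum_const, Finset.card_univ, Fintype.card_fun, Fintype.card_fin, nsmul_eq_mul,
          ENNReal.mul_rpow_of_nonneg _ _ hd, ← ENNReal.rpow_natCast_mul, mul_comm (k : ℝ),
          ENNReal.rpow_mul, ENNReal.rpow_natCast, mul_pow, mul_assoc]
        push_cast
        ring
  have hlim : Tendsto (fun k : ℕ => ((Fintype.card ι : ℝ≥0∞) * (c : ℝ≥0∞) ^ d) ^ k * D ^ d)
      atTop (𝓝 0) := by
    simpa using ENNReal.Tendsto.mul_const (ENNReal.tendsto_pow_atTop_nhds_zero_of_lt_one hcd)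
      (Or.inr (ENNReal.rpow_ne_top_of_nonneg hd hD))
  refine le_antisymm ?_ zero_le
  calc μH[d] s ≤ liminf (fun k : ℕ => ∑ w, ediam (U k w) ^ d) atTop :=
        Measure.hausdorffMeasure_le_liminf_sum d s _ hdiam U (.of_forall fun k w => hU k w)
          (.of_forall hs)
    _ ≤ liminf (fun k : ℕ => ((Fintype.card ι : ℝ≥0∞) * (c : ℝ≥0∞) ^ d) ^ k * D ^ d) atTop :=
        liminf_le_liminf (.of_forall hsum)
    _ = 0 := hlim.liminf_eq

theorem mul_rpow_lt_one_of_log_div_log_lt {m c d : ℝ} (hm : 0 ≤ m) (hc0 : 0 < c) (hc1 : c < 1)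
    (hd : Real.log m / Real.log (1 / c) < d) : m * c ^ d < 1 := by
  rcases hm.eq_or_lt with rfl | hm
  · simp
  have hlogc : 0 < Real.log (1 / c) := Real.log_pos (one_lt_one_div hc0 hc1)
  rw [div_lt_iff₀ hlogc, one_div, Real.log_inv] at hd
  rw [Real.rpow_def_of_pos hc0, ← Real.exp_log hm, ← Real.exp_add, Real.exp_lt_one_iff]
  linarith

theorem dimH_le_of_forall_cover (hc0 : 0 < c) (hc1 : c < 1) (hD : D ≠ ∞)
    (U : (k : ℕ) → (Fin k → ι) → Set E) (hU : ∀ k w, ediam (U k w) ≤ c ^ k * D)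
    (hs : ∀ k, s ⊆ ⋃ w, U k w) :
    dimH s ≤ ENNReal.ofReal (Real.log (Fintype.card ι) / Real.log (1 / c)) := by
  set L := Real.log (Fintype.card ι) / Real.log (1 / c)
  refine dimH_le fun d hd => le_of_not_gt fun hLd => ?_
  have hL0 : 0 ≤ L := div_nonneg (Real.log_natCast_nonneg _)
    (Real.log_nonneg (one_le_one_div hc0 hc1.le))
  rw [← ENNReal.ofReal_coe_nnreal, ENNReal.ofReal_lt_ofReal_iff_of_nonneg hL0] at hLd
  have hcd : (Fintype.card ι : ℝ≥0) * c ^ (d : ℝ) < 1 := by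
    rw [← NNReal.coe_lt_coe]
    push_cast
    exact mul_rpow_lt_one_of_log_div_log_lt (Nat.cast_nonneg _) hc0 hc1 hLd
  have hcd' : (Fintype.card ι : ℝ≥0∞) * (c : ℝ≥0∞) ^ (d : ℝ) < 1 := by
    rw [← ENNReal.coe_rpow_of_nonneg c d.coe_nonneg]
    exact_mod_cast hcd
  exact ENNReal.zero_ne_top <|
    (hausdorffMeasure_eq_zero_of_forall_cover hc1 hD U hU hs d.coe_nonneg hcd').symm.trans hd

end Cover

theorem upperHausdorffDim_le_of_lipschitzWith {E ι : Type*} [Fintype ι] [MetricSpace E]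
    [MeasurableSpace E] [BorelSpace E] {h : ι → E → E} {c : ℝ≥0} (hc0 : 0 < c) (hc1 : c < 1)
    (hlip : ∀ i, LipschitzWith c (h i)) {p : ι → ℝ≥0∞} (hp : ∑ i, p i = 1)
    (μ : Measure E) [IsProbabilityMeasure μ] (hinv : μ = ∑ i, p i • μ.map (h i)) :
    upperHausdorffDim μ ≤
      ENNReal.ofReal (Real.log (Fintype.card ι) / Real.log (1 / c)) := by
  obtain ⟨x₀, ρ, hρ⟩ := exists_measure_closedBall_eq_one_of_invariant hc1 hlip hp hinv
  choose U hUc hUd hUμ using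
    exists_closed_cover_of_invariant hlip hp hinv isClosed_closedBall hρ
  have hmeas : ∀ k, MeasurableSet (⋃ w, U k w) :=
    fun k => (isClosed_iUnion_of_finite (hUc k)).measurableSet
  have hfull : μ (⋂ k, ⋃ w, U k w) = 1 := by
    rw [← prob_compl_eq_zero_iff (.iInter hmeas), compl_iInter]
    exact measure_iUnion_null fun k => (prob_compl_eq_zero_iff (hmeas k)).2 (hUμ k)
  exact (upperHausdorffDim_le_dimH (.iInter hmeas) hfull).trans <|
    dimH_le_of_forall_cover hc0 hc1 isBounded_closedBall.ediam_ne_top U hUd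
      fun k => iInter_subset _ k

theorem sgd_svm_hausdorff_dim_bound_general
    (d n b m : ℕ) (hb : 0 < b) (hnm : n = m * b)
    (a : Fin n → EuclideanSpace ℝ (Fin d)) (y : Fin n → ℝ)
    (hy : ∀ i, y i = 1 ∨ y i = -1)
    (lam σ R η : ℝ) (hlam : 0 < lam) (hσ : 0 < σ)
    (hR : ∀ i, ‖a i‖ ≤ R)
    (hη : 0 < η) (hη' : η < 1 / (lam + R ^ 2 / (4 * σ)))
    (ℓ : EuclideanSpace ℝ (Fin d) → EuclideanSpace ℝ (Fin d) × ℝ → ℝ)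
    (hℓ : ∀ w z, ℓ w z =
      (1 - z.2 * ⟪z.1, w⟫ + σ * Real.log (1 + Real.exp (-(1 - z.2 * ⟪z.1, w⟫) / σ)))
        + lam * ‖w‖ ^ 2 / 2)
    (S : Fin m → Finset (Fin n))
    (hcard : ∀ i, (S i).card = b)
    (p : Fin m → ℝ≥0∞) (hpsum : ∑ i, p i = 1)
    (h : Fin m → EuclideanSpace ℝ (Fin d) → EuclideanSpace ℝ (Fin d))
    (hdef : ∀ i w, h i w = w - (η / b) • ∑ j ∈ S i, gradient (fun w' => ℓ w' (a j, y j)) w)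
    (μ : Measure (EuclideanSpace ℝ (Fin d))) [IsProbabilityMeasure μ]
    (hinv : μ = ∑ i, p i • μ.map (h i)) :
    upperHausdorffDim μ ≤
      ENNReal.ofReal (Real.log ((n : ℝ) / (b : ℝ)) / Real.log (1 / (1 - η * lam))) := by
  have hstep : η * (lam + R ^ 2 / (4 * σ)) < 1 := (lt_div_iff₀ (by positivity)).1 hη'
  have hc0 : 0 < 1 - η * lam := by
    nlinarith [show 0 ≤ η * (R ^ 2 / (4 * σ)) by positivity]
  have hlip : ∀ i, LipschitzWith (1 - η * lam).toNNReal (h i) := fun i => by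
    have hS : (S i).Nonempty := Finset.card_pos.1 (hcard i ▸ hb)
    have hv : ∀ j ∈ S i, ‖y j • a j‖ ≤ R := fun j _ => by
      rcases hy j with hyj | hyj <;> simpa [hyj, norm_smul] using hR j
    have hmap : h i = fun w => w - (η / #(S i)) • ∑ j ∈ S i,
        gradient (fun w' => smoothHinge σ ⟪y j • a j, w'⟫ + lam * ‖w'‖ ^ 2 / 2) w := by
      funext w
      simp [hdef, hcard, hℓ, smoothHinge, real_inner_smul_left]
    rw [hmap]
    exact lipschitzWith_sgdStep_smoothHinge hS _ hv hσ hη.le hstep.le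
  have hc1 : (1 - η * lam).toNNReal < 1 := by
    rw [Real.toNNReal_lt_one]
    linarith [mul_pos hη hlam]
  have hnb : (n : ℝ) / b = Fintype.card (Fin m) := by
    rw [hnm, Fintype.card_fin, Nat.cast_mul, mul_div_cancel_right₀ _ (by positivity)]
  rw [hnb, ← Real.coe_toNNReal _ hc0.le]
  exact upperHausdorffDim_le_of_lipschitzWith (Real.toNNReal_pos.2 hc0) hc1 hlip hpsum μ hinv

/-- Support vector machines with smooth hinge loss, SGD:
for `ℓ(w,(a,y)) = ℓ_σ(y aᵀw) + λ‖w‖²/2` with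
`ℓ_σ(z) = 1 − z + σ log(1 + e^{−(1−z)/σ})` and step-size
`0 < η < 1/(λ + R²/(4σ))`, any invariant measure `μ` of the SGD iterated
function system with batch size `b` satisfies
`dim̄_H μ ≤ log(n/b) / log(1/(1 − ηλ))`. -/
theorem sgd_svm_hausdorff_dim_bound
    (d n b m : ℕ) (hb : 0 < b) (hnm : n = m * b)
    (a : Fin n → EuclideanSpace ℝ (Fin d)) (y : Fin n → ℝ)
    (hy : ∀ i, y i = 1 ∨ y i = -1)
    (lam σ R η : ℝ) (hlam : 0 < lam) (hσ : 0 < σ)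
    (hR : ∀ i, ‖a i‖ ≤ R) (hR0 : 0 ≤ R)
    (hη : 0 < η) (hη' : η < 1 / (lam + R ^ 2 / (4 * σ)))
    (ℓ : EuclideanSpace ℝ (Fin d) → EuclideanSpace ℝ (Fin d) × ℝ → ℝ)
    (hℓ : ∀ w z, ℓ w z =
      (1 - z.2 * ⟪z.1, w⟫ + σ * Real.log (1 + Real.exp (-(1 - z.2 * ⟪z.1, w⟫) / σ)))
        + lam * ‖w‖ ^ 2 / 2)
    (S : Fin m → Finset (Fin n))
    (hcard : ∀ i, (S i).card = b)
    (hdisj : ∀ i j, i ≠ j → Disjoint (S i) (S j))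
    (hcover : ∀ j : Fin n, ∃ i, j ∈ S i)
    (p : Fin m → ℝ≥0∞) (hp : ∀ i, 0 < p i) (hpsum : ∑ i, p i = 1)
    (h : Fin m → EuclideanSpace ℝ (Fin d) → EuclideanSpace ℝ (Fin d))
    (hdef : ∀ i w, h i w = w - (η / b) • ∑ j ∈ S i, gradient (fun w' => ℓ w' (a j, y j)) w)
    (μ : Measure (EuclideanSpace ℝ (Fin d))) [IsProbabilityMeasure μ]
    (hinv : μ = ∑ i, p i • μ.map (h i)) :
    upperHausdorffDim μ ≤
      ENNReal.ofReal (Real.log ((n : ℝ) / (b : ℝ)) / Real.log (1 / (1 - η * lam))) :=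
  sgd_svm_hausdorff_dim_bound_general d n b m hb hnm a y hy lam σ R η hlam hσ hR hη hη' ℓ hℓ S hcard
    p hpsum h hdef μ hinv
end
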